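/- arXiv:2003.11537 — 10 statements merged into one kernel-verified Lean document; each statement's English description precedes it below -/
import Mathlib

section
/- Let (Y, ψ) be integrable real random variables on a common probability space satisfying E[Y | σ(ψ)] = ψ almost surely. Let κ be a regular conditional distribution of Y given ψ, and for τ ∈ (0,1) and u ∈ ℝ let F⁻¹_{Y|ψ}(τ | u) = inf{x ∈ ℝ : κ(u)((−∞, x]) ≥ τ} be the conditional quantile function. Assume that for every τ ∈ (0,1) the map u ↦ F⁻¹_{Y|ψ}(τ | u) is continuous, and that Δ(y₀) = 0 for some y₀ in the interior of the support of the distribution of ψ. Then the conditional distribution of Y given ψ = y₀ is degenerate at y₀: κ(y₀)({y₀}) = 1. -/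
/-!
By the layer-cake formula, `Δ(y₀) = E (y₀ - Y)⁺ - E (y₀ - ψ)⁺`. Since `E[Y | ψ] = ψ`,
`E[(y₀ - Y); ψ ≤ y₀] = E[(y₀ - ψ); ψ ≤ y₀] = E (y₀ - ψ)⁺`, so `Δ(y₀) = 0` is the equality case
of `(y₀ - Y) 1{ψ ≤ y₀} ≤ (y₀ - Y)⁺`: almost surely `Y ≤ y₀` where `ψ ≤ y₀` and `Y ≥ y₀` where
`ψ > y₀`. Through the kernel, `κ u` is carried by `(-∞, y₀]` for a.e. `u < y₀` and by `[y₀, ∞)`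
for a.e. `u > y₀`, so every conditional quantile is `≤ y₀` at points arbitrarily close to `y₀`
from the left and `≥ y₀` at points arbitrarily close from the right (these exist because `y₀`
is interior to the support of `ψ`). Continuity in `u` gives `F⁻¹(τ | y₀) = y₀` for every
`τ ∈ (0, 1)`, i.e. `κ y₀` is the Dirac mass at `y₀`.
-/

open MeasureTheory ProbabilityTheory

/-- The topological support of a measure on ℝ: points whose every neighborhood has
positive measure. -/
def measSupport (μ : Measure ℝ) : Set ℝ := {x : ℝ | ∀ U ∈ nhds x, 0 < μ U}

/-- The conditional quantile function `F⁻¹_{Y|ψ}(τ | u)` associated with a Markov kernel `κ`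
giving the conditional distribution of `Y` given `ψ = u`. -/
noncomputable def condQuantile (κ : Kernel ℝ ℝ) (τ : ℝ) (u : ℝ) : ℝ :=
  sInf {x : ℝ | τ ≤ (κ u (Set.Iic x)).toReal}

open Set Filter Topology
open scoped ENNReal

noncomputable def quantile (ν : Measure ℝ) (τ : ℝ) : ℝ := sInf {x | τ ≤ cdf ν x}

lemma condQuantile_eq_quantile (κ : Kernel ℝ ℝ) [IsMarkovKernel κ] (τ u : ℝ) :
    condQuantile κ τ u = quantile (κ u) τ := by
  simp only [condQuantile, quantile, cdf_eq_real, measureReal_def]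

section Quantile

variable {ν : Measure ℝ} {τ : ℝ}

lemma bddBelow_setOf_le_cdf (hτ : 0 < τ) : BddBelow {x | τ ≤ cdf ν x} := by
  obtain ⟨x₀, hx₀⟩ :=
    eventually_atBot.1 ((tendsto_cdf_atBot ν).eventually (eventually_lt_nhds hτ))
  exact ⟨x₀, fun x hx => not_lt.1 fun hlt => (hx₀ x hlt.le).not_ge hx⟩

lemma nonempty_setOf_le_cdf (hτ : τ < 1) : {x | τ ≤ cdf ν x}.Nonempty :=
  ((tendsto_cdf_atTop ν).eventually (eventually_ge_nhds hτ)).exists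

lemma quantile_le_iff (hτ : τ ∈ Ioo 0 1) {x : ℝ} : quantile ν τ ≤ x ↔ τ ≤ cdf ν x := by
  refine ⟨fun hx => ?_, fun hx => csInf_le (bddBelow_setOf_le_cdf hτ.1) hx⟩
  have hright : ∀ r ∈ Ioi x, τ ≤ cdf ν r := fun r hr => by
    obtain ⟨z, hz, hzr⟩ := exists_lt_of_csInf_lt (nonempty_setOf_le_cdf hτ.2) (hx.trans_lt hr)
    exact hz.trans (monotone_cdf ν hzr.le)
  exact ge_of_tendsto (((cdf ν).right_continuous x).mono Ioi_subset_Ici_self)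
    (eventually_nhdsWithin_of_forall hright)

variable [IsProbabilityMeasure ν]

lemma quantile_le_of_measure_Ioi_eq_zero (hτ : τ ∈ Ioo 0 1) {y : ℝ} (h : ν (Ioi y) = 0) :
    quantile ν τ ≤ y := by
  have hIic : ν (Iic y) = 1 := (prob_compl_eq_zero_iff measurableSet_Iic).1 (by rwa [compl_Iic])
  rw [quantile_le_iff hτ, cdf_eq_real, measureReal_def, hIic, ENNReal.toReal_one]
  exact hτ.2.le

lemma le_quantile_of_measure_Iio_eq_zero (hτ : τ ∈ Ioo 0 1) {y : ℝ} (h : ν (Iio y) = 0) :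
    y ≤ quantile ν τ := by
  by_contra! hlt
  have hτ_le := (quantile_le_iff (ν := ν) hτ).1 le_rfl
  rw [cdf_eq_real, measureReal_def, measure_mono_null (Iic_subset_Iio.2 hlt) h,
    ENNReal.toReal_zero] at hτ_le
  exact hτ.1.not_ge hτ_le

lemma eq_dirac_of_forall_quantile_eq {y : ℝ} (h : ∀ τ ∈ Ioo (0 : ℝ) 1, quantile ν τ = y) :
    ν = Measure.dirac y := by
  refine Measure.eq_of_cdf _ _ (StieltjesFunction.ext fun x => ?_)
  have hle_iff : ∀ τ ∈ Ioo (0 : ℝ) 1, y ≤ x ↔ τ ≤ cdf ν x := fun τ hτ =>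
    h τ hτ ▸ quantile_le_iff hτ
  have h0 := cdf_nonneg ν x
  have h1 := cdf_le_one ν x
  rw [cdf_eq_real (Measure.dirac y), measureReal_def, Measure.dirac_apply' _ measurableSet_Iic]
  by_cases hyx : y ≤ x
  · rw [indicator_of_mem (show y ∈ Iic x from hyx), Pi.one_apply, ENNReal.toReal_one]
    by_contra hne
    have hlt : cdf ν x < 1 := lt_of_le_of_ne h1 hne
    have := (hle_iff ((cdf ν x + 1) / 2) ⟨by linarith, by linarith⟩).1 hyx
    linarith
  · rw [indicator_of_notMem (show y ∉ Iic x from hyx), ENNReal.toReal_zero]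
    by_contra hne
    have hpos : 0 < cdf ν x := lt_of_le_of_ne h0 (Ne.symm hne)
    exact hyx ((hle_iff (cdf ν x / 2) ⟨by linarith, by linarith⟩).2 (by linarith))

end Quantile

lemma frequently_nhdsWithin_of_ae_restrict {μ : Measure ℝ} {s : Set ℝ} {x : ℝ} {p : ℝ → Prop}
    [(𝓝[s] x).NeBot] (hs : IsOpen s) (hx : x ∈ interior (measSupport μ))
    (h : ∀ᵐ v ∂μ.restrict s, p v) : ∃ᶠ v in 𝓝[s] x, p v := by
  rw [Filter.frequently_iff]
  intro U hU
  obtain ⟨u, hu, hxu, huU⟩ := mem_nhdsWithin.1 hU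
  have hW : IsOpen (s ∩ (u ∩ interior (measSupport μ))) := hs.inter (hu.inter isOpen_interior)
  obtain ⟨w, hw⟩ : (s ∩ (u ∩ interior (measSupport μ))).Nonempty :=
    nonempty_of_mem (inter_mem_nhdsWithin s ((hu.inter isOpen_interior).mem_nhds ⟨hxu, hx⟩))
  have hpos : μ (s ∩ (u ∩ interior (measSupport μ))) ≠ 0 :=
    (interior_subset hw.2.2 _ (hW.mem_nhds hw)).ne'
  obtain ⟨v, hvW, hv⟩ := Measure.exists_mem_of_measure_ne_zero_of_ae hpos
    (ae_restrict_of_ae_restrict_of_subset inter_subset_left h)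
  exact ⟨v, huU ⟨hvW.2.1, hvW.1⟩, hv⟩

lemma condQuantile_eq_of_ae_restrict {κ : Kernel ℝ ℝ} [IsMarkovKernel κ] {μ : Measure ℝ}
    {τ y : ℝ} (hτ : τ ∈ Ioo 0 1) (hc : ContinuousAt (condQuantile κ τ) y)
    (hy : y ∈ interior (measSupport μ))
    (hleft : ∀ᵐ v ∂μ.restrict (Iio y), κ v (Ioi y) = 0)
    (hright : ∀ᵐ v ∂μ.restrict (Ioi y), κ v (Iio y) = 0) :
    condQuantile κ τ y = y := by
  have hleft' : ∃ᶠ v in 𝓝[<] y, condQuantile κ τ v ∈ Iic y :=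
    (frequently_nhdsWithin_of_ae_restrict isOpen_Iio hy hleft).mono fun v hv =>
      (condQuantile_eq_quantile κ τ v).trans_le (quantile_le_of_measure_Ioi_eq_zero hτ hv)
  have hright' : ∃ᶠ v in 𝓝[>] y, condQuantile κ τ v ∈ Ici y :=
    (frequently_nhdsWithin_of_ae_restrict isOpen_Ioi hy hright).mono fun v hv =>
      (le_quantile_of_measure_Iio_eq_zero hτ hv).trans_eq (condQuantile_eq_quantile κ τ v).symm
  exact le_antisymm
    (isClosed_Iic.mem_of_frequently_of_tendsto hleft' (hc.tendsto.mono_left nhdsWithin_le_nhds))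
    (isClosed_Ici.mem_of_frequently_of_tendsto hright' (hc.tendsto.mono_left nhdsWithin_le_nhds))

lemma lintegral_ofReal_sub_eq_lintegral_Iic (μ : Measure ℝ) [SFinite μ] (y : ℝ) :
    ∫⁻ x, ENNReal.ofReal (y - x) ∂μ = ∫⁻ t in Iic y, μ (Iic t) := by
  have hIcc : ∀ x, ENNReal.ofReal (y - x) = ∫⁻ t in Iic y, (Ici x).indicator 1 t := fun x => by
    rw [lintegral_indicator_one measurableSet_Ici, Measure.restrict_apply measurableSet_Ici,
      Ici_inter_Iic, Real.volume_Icc]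
  have hmeas : Measurable (Function.uncurry fun x t : ℝ => (Ici x).indicator (1 : ℝ → ℝ≥0∞) t) :=
    measurable_const.indicator (measurableSet_le measurable_fst measurable_snd)
  simp_rw [hIcc]
  rw [lintegral_lintegral_swap hmeas.aemeasurable]
  refine setLIntegral_congr_fun measurableSet_Iic fun t _ => ?_
  rw [← lintegral_indicator_one measurableSet_Iic]
  rfl

lemma integrableOn_Iic_cdf_and_integral_eq {μ : Measure ℝ} [IsProbabilityMeasure μ]
    (hμ : Integrable id μ) (y : ℝ) :
    IntegrableOn (cdf μ) (Iic y) ∧ ∫ t in Iic y, cdf μ t = ∫ x, max (y - x) 0 ∂μ := by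
  have hsub : Integrable (fun x => y - x) μ := (integrable_const y).sub hμ
  have hlint : ∫⁻ t in Iic y, ENNReal.ofReal (cdf μ t) = ∫⁻ x, ENNReal.ofReal (y - x) ∂μ := by
    simp_rw [ofReal_cdf]
    exact (lintegral_ofReal_sub_eq_lintegral_Iic μ y).symm
  have hint : IntegrableOn (cdf μ) (Iic y) :=
    ⟨(monotone_cdf μ).measurable.aestronglyMeasurable, by
      rw [hasFiniteIntegral_iff_ofReal (ae_of_all _ (cdf_nonneg μ)), hlint]
      exact hsub.lintegral_lt_top⟩
  refine ⟨hint, (ENNReal.ofReal_eq_ofReal_iff (integral_nonneg (cdf_nonneg μ))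
    (integral_nonneg fun x => le_max_right (y - x) 0)).1 ?_⟩
  rw [ofReal_integral_eq_lintegral_ofReal hint (ae_of_all _ (cdf_nonneg μ)), hlint,
    ofReal_integral_eq_lintegral_ofReal hsub.pos_part (ae_of_all _ fun x => le_max_right _ _)]
  simp_rw [ENNReal.ofReal_max, ENNReal.ofReal_zero, max_zero]

lemma integrableOn_Iic_cdf_map_and_integral_eq {Ω : Type*} [MeasurableSpace Ω] {P : Measure Ω}
    [IsProbabilityMeasure P] {X : Ω → ℝ} (hX : Measurable X) (hXi : Integrable X P) (y : ℝ) :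
    IntegrableOn (cdf (P.map X)) (Iic y) ∧
      ∫ t in Iic y, cdf (P.map X) t = ∫ ω, max (y - X ω) 0 ∂P := by
  have : IsProbabilityMeasure (P.map X) := Measure.isProbabilityMeasure_map hX.aemeasurable
  have hid : Integrable id (P.map X) :=
    (integrable_map_measure aestronglyMeasurable_id hX.aemeasurable).2 hXi
  obtain ⟨hint, heq⟩ := integrableOn_Iic_cdf_and_integral_eq hid y
  refine ⟨hint, heq.trans (integral_map hX.aemeasurable ?_)⟩
  exact ((measurable_const.sub measurable_id).max measurable_const).aestronglyMeasurable

section CondExp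

variable {Ω : Type*} {m m₀ : MeasurableSpace Ω} {P : Measure Ω}

lemma ae_restrict_nonneg_and_nonpos_compl_of_setIntegral_eq {f : Ω → ℝ} (hf : Integrable f P)
    {s : Set Ω} (hs : MeasurableSet s) (h : ∫ ω in s, f ω ∂P = ∫ ω, max (f ω) 0 ∂P) :
    (∀ᵐ ω ∂P.restrict s, 0 ≤ f ω) ∧ ∀ᵐ ω ∂P.restrict sᶜ, f ω ≤ 0 := by
  have hpos := hf.pos_part
  have hgap_nonneg : 0 ≤ fun ω => max (f ω) 0 - f ω := fun ω => sub_nonneg.2 (le_max_left _ _)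
  have hpos_nonneg : 0 ≤ fun ω => max (f ω) 0 := fun ω => le_max_right _ _
  have hgap_int : 0 ≤ ∫ ω in s, (max (f ω) 0 - f ω) ∂P := integral_nonneg hgap_nonneg
  have hpos_int : 0 ≤ ∫ ω in sᶜ, max (f ω) 0 ∂P := integral_nonneg hpos_nonneg
  have hsum : ∫ ω in s, (max (f ω) 0 - f ω) ∂P + ∫ ω in sᶜ, max (f ω) 0 ∂P = 0 := by
    rw [integral_sub hpos.integrableOn hf.integrableOn, h]
    linarith [integral_add_compl hs hpos]
  have hgap :=
    (integral_eq_zero_iff_of_nonneg hgap_nonneg (hpos.sub hf).integrableOn).1 (by linarith)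
  have hcompl := (integral_eq_zero_iff_of_nonneg hpos_nonneg hpos.integrableOn).1 (by linarith)
  refine ⟨hgap.mono fun ω hω => ?_, hcompl.mono fun ω hω => ?_⟩
  · have : max (f ω) 0 - f ω = 0 := hω
    linarith [le_max_right (f ω) 0]
  · have : max (f ω) 0 = 0 := hω
    linarith [le_max_left (f ω) 0]

variable [IsFiniteMeasure P]

lemma ae_restrict_le_and_ge_of_condExp_eq (hm : m ≤ m₀) {Y ψ : Ω → ℝ}
    (hψ : Measurable[m] ψ) (hY : Integrable Y P) (hψi : Integrable ψ P) (hYψ : P[Y|m] =ᵐ[P] ψ)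
    {y : ℝ} (h : ∫ ω, max (y - Y ω) 0 ∂P = ∫ ω, max (y - ψ ω) 0 ∂P) :
    (∀ᵐ ω ∂P.restrict (ψ ⁻¹' Iic y), Y ω ≤ y) ∧ ∀ᵐ ω ∂P.restrict (ψ ⁻¹' Ioi y), y ≤ Y ω := by
  have hs : MeasurableSet (ψ ⁻¹' Iic y) := hm _ (hψ measurableSet_Iic)
  have hYs : ∫ ω in ψ ⁻¹' Iic y, Y ω ∂P = ∫ ω in ψ ⁻¹' Iic y, ψ ω ∂P :=
    (setIntegral_condExp hm hY (hψ measurableSet_Iic)).symm.trans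
      (integral_congr_ae (ae_restrict_of_ae hYψ))
  have hposψ : (fun ω => max (y - ψ ω) 0) = (ψ ⁻¹' Iic y).indicator fun ω => y - ψ ω := by
    ext ω
    by_cases hω : ψ ω ≤ y
    · simp [hω]
    · simp [hω, (not_le.1 hω).le]
  have hc : Integrable (fun _ => y) (P.restrict (ψ ⁻¹' Iic y)) := integrable_const y
  have key : ∫ ω in ψ ⁻¹' Iic y, (y - Y ω) ∂P = ∫ ω, max (y - Y ω) 0 ∂P := by
    rw [h, hposψ, integral_indicator hs, integral_sub hc hY.integrableOn,
      integral_sub hc hψi.integrableOn, hYs]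
  obtain ⟨hle, hge⟩ :=
    ae_restrict_nonneg_and_nonpos_compl_of_setIntegral_eq ((integrable_const y).sub hY) hs key
  rw [← compl_Iic, preimage_compl]
  exact ⟨hle.mono fun ω hω => sub_nonneg.1 hω, hge.mono fun ω hω => sub_nonpos.1 hω⟩

lemma ae_restrict_eq_zero_of_condExp_ae_eq (hm : m ≤ m₀) {f g : Ω → ℝ} (hf : Integrable f P)
    (hfg : P[f|m] =ᵐ[P] g) (hg : 0 ≤ᵐ[P] g) {u : Set Ω} (hu : MeasurableSet[m] u)
    (hfu : f =ᵐ[P.restrict u] 0) : g =ᵐ[P.restrict u] 0 := by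
  have hint : ∫ ω in u, g ω ∂P = 0 := by
    rw [← integral_congr_ae (ae_restrict_of_ae hfg), setIntegral_condExp hm hf hu]
    exact integral_eq_zero_of_ae hfu
  exact (integral_eq_zero_iff_of_nonneg_ae (ae_restrict_of_ae hg)
    (integrable_condExp.congr hfg).integrableOn).1 hint

lemma ae_restrict_map_kernel_eq_zero_of_ae_notMem {Y ψ : Ω → ℝ} (hY : Measurable Y)
    (hψ : Measurable ψ) (κ : Kernel ℝ ℝ) [IsFiniteKernel κ] {B : Set ℝ} (hB : MeasurableSet B)
    (hκB : P[fun ω => Set.indicator (Y ⁻¹' B) (fun _ => (1 : ℝ)) ω |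
        MeasurableSpace.comap ψ Real.measurableSpace] =ᵐ[P] fun ω => ((κ (ψ ω)) B).toReal)
    {t : Set ℝ} (ht : MeasurableSet t) (hYB : ∀ᵐ ω ∂P.restrict (ψ ⁻¹' t), Y ω ∉ B) :
    ∀ᵐ v ∂(P.map ψ).restrict t, κ v B = 0 := by
  have hzero := ae_restrict_eq_zero_of_condExp_ae_eq hψ.comap_le
    ((integrable_const 1).indicator (hY hB)) hκB (ae_of_all _ fun _ => ENNReal.toReal_nonneg)
    ⟨t, ht, rfl⟩ (hYB.mono fun ω hω => by simp [hω])
  rw [Measure.restrict_map hψ ht,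
    ae_map_iff hψ.aemeasurable (p := fun v => κ v B = 0)
      (Kernel.measurable_coe κ hB (measurableSet_singleton 0))]
  exact hzero.mono fun ω hω =>
    ((ENNReal.toReal_eq_zero_iff _).1 hω).resolve_right (measure_ne_top _ _)

end CondExp

/-- Proposition 1 of the paper: under rational expectations (`E[Y | σ(ψ)] = ψ` a.s.),
if the conditional quantile functions are continuous in the conditioning value and
`Δ(y₀) = 0` at a point `y₀` interior to the support of the distribution of `ψ`, then the
conditional distribution of `Y` given `ψ = y₀` is degenerate at `y₀`. -/
theorem degenerate_at_boundary
    {Ω : Type*} [MeasurableSpace Ω] (P : Measure Ω) [IsProbabilityMeasure P]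
    {Y ψ : Ω → ℝ} (hYm : Measurable Y) (hψm : Measurable ψ)
    (hYi : Integrable Y P) (hψi : Integrable ψ P)
    (hRE : P[Y | MeasurableSpace.comap ψ Real.measurableSpace] =ᵐ[P] ψ)
    (κ : Kernel ℝ ℝ) [IsMarkovKernel κ]
    (hκ : ∀ B : Set ℝ, MeasurableSet B →
      P[fun ω => Set.indicator (Y ⁻¹' B) (fun _ => (1 : ℝ)) ω |
          MeasurableSpace.comap ψ Real.measurableSpace]
        =ᵐ[P] fun ω => ((κ (ψ ω)) B).toReal)
    (hcont : ∀ τ ∈ Set.Ioo (0 : ℝ) 1, Continuous fun u : ℝ => condQuantile κ τ u)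
    {y₀ : ℝ} (hy₀ : y₀ ∈ interior (measSupport (P.map ψ)))
    (hΔ : ∫ t in Set.Iic y₀, (cdf (P.map Y) t - cdf (P.map ψ) t) = 0) :
    κ y₀ {y₀} = 1 := by
  have hΔ' : ∫ ω, max (y₀ - Y ω) 0 ∂P = ∫ ω, max (y₀ - ψ ω) 0 ∂P := by
    obtain ⟨hYint, hYeq⟩ := integrableOn_Iic_cdf_map_and_integral_eq hYm hYi y₀
    obtain ⟨hψint, hψeq⟩ := integrableOn_Iic_cdf_map_and_integral_eq hψm hψi y₀
    rw [integral_sub hYint hψint] at hΔ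
    linarith
  obtain ⟨hle, hge⟩ := ae_restrict_le_and_ge_of_condExp_eq hψm.comap_le
    (comap_measurable ψ) hYi hψi hRE hΔ'
  have hleft : ∀ᵐ v ∂(P.map ψ).restrict (Iio y₀), κ v (Ioi y₀) = 0 :=
    ae_restrict_of_ae_restrict_of_subset Iio_subset_Iic_self
      (ae_restrict_map_kernel_eq_zero_of_ae_notMem hYm hψm κ measurableSet_Ioi
        (hκ _ measurableSet_Ioi) measurableSet_Iic (hle.mono fun ω hω => not_lt.2 hω))
  have hright : ∀ᵐ v ∂(P.map ψ).restrict (Ioi y₀), κ v (Iio y₀) = 0 :=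
    ae_restrict_map_kernel_eq_zero_of_ae_notMem hYm hψm κ measurableSet_Iio
      (hκ _ measurableSet_Iio) measurableSet_Ioi (hge.mono fun ω hω => not_lt.2 hω)
  have hq : ∀ τ ∈ Ioo (0 : ℝ) 1, quantile (κ y₀) τ = y₀ := fun τ hτ =>
    (condQuantile_eq_quantile κ τ y₀).symm.trans
      (condQuantile_eq_of_ae_restrict hτ (hcont τ hτ).continuousAt hy₀ hleft hright)
  rw [eq_dirac_of_forall_quantile_eq hq]
  simp
end

section
/- Let Y and ψ be integrable real random variables on a common probability space satisfying H₀, so that in particular E[Y] = E[ψ] and E[(y − Y)⁺] ≥ E[(y − ψ)⁺] for all y ∈ ℝ. Let ε = Y − ψ, and let ξ_ψ and ξ_Y be integrable random variables with ξ_ψ independent of ψ, E[ξ_ψ] = 0, ξ_Y independent of Y, E[ξ_Y] = 0. Define Ŷ = Y + ξ_Y and ψ̂ = ψ + ξ_ψ. Suppose in addition that ε + ξ_Y is independent of ψ and that F_{ξ_ψ} dominates F_{ξ_Y + ε} at the second order. Then Ŷ and ψ̂ satisfy H₀: E[Ŷ] = E[ψ̂] and E[(y − Ŷ)⁺] ≥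 E[(y − ψ̂)⁺] for all y ∈ ℝ. -/
/-!
Both `Ŷ = ψ + (ε + ξ_Y)` and `ψ̂ = ψ + ξ_ψ` are `ψ` plus a noise independent of `ψ`, so by
Fubini `E[(y - ψ̂)⁺]` and `E[(y - Ŷ)⁺]` are the averages over the law of `ψ` of
`E[(y - s - ξ_ψ)⁺]` and `E[(y - s - (ε + ξ_Y))⁺]`. Since `E[(a - X)⁺] = ∫_{-∞}^a F_X`,
second-order dominance compares the integrands for every `s`. The means agree because the
errors are centred.
-/

open MeasureTheory ProbabilityTheory

/-- A cdf `F` dominates a cdf `G` at the second order if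
`∫_{-∞}^t F(s) ds ≤ ∫_{-∞}^t G(s) ds` for all `t`. Here stated for the laws `μ` and `ν`. -/
def SecondOrderDom (μ ν : Measure ℝ) : Prop :=
  ∀ t : ℝ, ∫ s in Set.Iic t, cdf μ s ≤ ∫ s in Set.Iic t, cdf ν s

open scoped ENNReal

theorem lintegral_ofReal_sub_eq_setLIntegral_cdf (ρ : Measure ℝ) [IsProbabilityMeasure ρ] (a : ℝ) :
    ∫⁻ u, ENNReal.ofReal (a - u) ∂ρ = ∫⁻ s in Set.Iic a, ENNReal.ofReal (cdf ρ s) := by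
  -- Both sides are the `ρ ⊗ volume`-measure of `{(u, s) | u ≤ s ≤ a}`.
  have hvol (u : ℝ) : ENNReal.ofReal (a - u) = ∫⁻ s in Set.Iic a, (Set.Ici u).indicator 1 s := by
    rw [lintegral_indicator_one measurableSet_Ici, Measure.restrict_apply measurableSet_Ici,
      Set.Ici_inter_Iic, Real.volume_Icc]
  have hcdf (s : ℝ) : ENNReal.ofReal (cdf ρ s) = ∫⁻ u, (Set.Ici u).indicator 1 s ∂ρ := by
    rw [ofReal_cdf, ← lintegral_indicator_one measurableSet_Iic]
    rfl
  simp_rw [hvol, hcdf]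
  exact lintegral_lintegral_swap
    ((measurable_one.indicator (measurableSet_le measurable_fst measurable_snd)).aemeasurable)

theorem SecondOrderDom.lintegral_ofReal_sub_le {μ ν : Measure ℝ} [IsProbabilityMeasure μ]
    [IsProbabilityMeasure ν] (h : SecondOrderDom μ ν) (hμ : Integrable id μ) (a : ℝ) :
    ∫⁻ u, ENNReal.ofReal (a - u) ∂μ ≤ ∫⁻ u, ENNReal.ofReal (a - u) ∂ν := by
  have hμfin : ∫⁻ s in Set.Iic a, ENNReal.ofReal (cdf μ s) ≠ ∞ := by
    rw [← lintegral_ofReal_sub_eq_setLIntegral_cdf]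
    exact ((integrable_const a).sub hμ).lintegral_lt_top.ne
  have hintegral (ρ : Measure ℝ) [IsProbabilityMeasure ρ] : ∫ s in Set.Iic a, cdf ρ s
      = (∫⁻ s in Set.Iic a, ENNReal.ofReal (cdf ρ s)).toReal :=
    integral_eq_lintegral_of_nonneg_ae (ae_of_all _ (cdf_nonneg ρ))
      (monotone_cdf ρ).measurable.aestronglyMeasurable
  rw [lintegral_ofReal_sub_eq_setLIntegral_cdf, lintegral_ofReal_sub_eq_setLIntegral_cdf]
  calc ∫⁻ s in Set.Iic a, ENNReal.ofReal (cdf μ s)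
      = ENNReal.ofReal (∫ s in Set.Iic a, cdf μ s) := by
        rw [hintegral, ENNReal.ofReal_toReal hμfin]
    _ ≤ ENNReal.ofReal (∫ s in Set.Iic a, cdf ν s) := ENNReal.ofReal_le_ofReal (h a)
    _ ≤ ∫⁻ s in Set.Iic a, ENNReal.ofReal (cdf ν s) := by
        rw [hintegral]; exact ENNReal.ofReal_toReal_le

theorem integral_max_zero_le_of_lintegral_ofReal_le {α : Type*} [MeasurableSpace α]
    {μ : Measure α} {f g : α → ℝ} (hf : AEStronglyMeasurable f μ) (hg : Integrable g μ)
    (hfg : ∫⁻ x, ENNReal.ofReal (f x) ∂μ ≤ ∫⁻ x, ENNReal.ofReal (g x) ∂μ) :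
    ∫ x, max (f x) 0 ∂μ ≤ ∫ x, max (g x) 0 ∂μ := by
  have hpos {h : α → ℝ} (hh : AEStronglyMeasurable h μ) :
      ∫ x, max (h x) 0 ∂μ = (∫⁻ x, ENNReal.ofReal (h x) ∂μ).toReal := by
    rw [integral_eq_lintegral_of_nonneg_ae (f := fun x => max (h x) 0)
      (ae_of_all _ fun _ => le_max_right _ _)
      (hh.aemeasurable.max aemeasurable_const).aestronglyMeasurable]
    simp only [ENNReal.ofReal_max, ENNReal.ofReal_zero, zero_le, sup_of_le_left]
  rw [hpos hf, hpos hg.1]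
  exact ENNReal.toReal_mono hg.lintegral_lt_top.ne hfg

section IndependentNoise

variable {Ω : Type*} [MeasurableSpace Ω] {P : Measure Ω} {ψ X X' : Ω → ℝ}

theorem lintegral_ofReal_sub_add_of_indepFun [IsFiniteMeasure P]
    (hψ : AEMeasurable ψ P) (hX : AEMeasurable X P) (hind : IndepFun X ψ P) (y : ℝ) :
    ∫⁻ ω, ENNReal.ofReal (y - (ψ ω + X ω)) ∂P
      = ∫⁻ s, ∫⁻ u, ENNReal.ofReal (y - s - u) ∂(P.map X) ∂(P.map ψ) := by
  have hmeas : Measurable fun p : ℝ × ℝ => ENNReal.ofReal (y - p.1 - p.2) := by fun_prop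
  rw [← lintegral_prod _ hmeas.aemeasurable,
    ← (indepFun_iff_map_prod_eq_prod_map_map hψ hX).1 hind.symm,
    lintegral_map' hmeas.aemeasurable (hψ.prodMk hX)]
  simp_rw [sub_add_eq_sub_sub]

theorem integral_max_sub_add_le_of_indepFun [IsProbabilityMeasure P]
    (hψ : AEMeasurable ψ P) (hX : Integrable X P) (hX' : AEMeasurable X' P)
    (hψX' : Integrable (fun ω => ψ ω + X' ω) P) (hind : IndepFun X ψ P) (hind' : IndepFun X' ψ P)
    (hdom : SecondOrderDom (P.map X) (P.map X')) (y : ℝ) :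
    ∫ ω, max (y - (ψ ω + X ω)) 0 ∂P ≤ ∫ ω, max (y - (ψ ω + X' ω)) 0 ∂P := by
  have := Measure.isProbabilityMeasure_map (μ := P) hX.aemeasurable
  have := Measure.isProbabilityMeasure_map (μ := P) hX'
  have hlaw : Integrable id (P.map X) :=
    (integrable_map_measure aestronglyMeasurable_id hX.aemeasurable).2 hX
  refine integral_max_zero_le_of_lintegral_ofReal_le
    (aestronglyMeasurable_const.sub (hψ.add hX.aemeasurable).aestronglyMeasurable)
    ((integrable_const y).sub hψX') ?_
  rw [lintegral_ofReal_sub_add_of_indepFun hψ hX.aemeasurable hind,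
    lintegral_ofReal_sub_add_of_indepFun hψ hX' hind']
  exact lintegral_mono fun s => hdom.lintegral_ofReal_sub_le hlaw (y - s)

end IndependentNoise

theorem measurement_error_robustness_general
    {Ω : Type*} [MeasurableSpace Ω] (P : Measure Ω) [IsProbabilityMeasure P]
    {Y ψ ξψ ξY : Ω → ℝ}
    (hYi : Integrable Y P) (hψi : Integrable ψ P)
    (hξψi : Integrable ξψ P) (hξYi : Integrable ξY P)
    -- `(Y, ψ)` satisfy H₀:
    (hmean : ∫ ω, Y ω ∂P = ∫ ω, ψ ω ∂P)
    -- classical measurement errors: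
    (hξψindep : IndepFun ξψ ψ P) (hξψ0 : ∫ ω, ξψ ω ∂P = 0)
    (hξY0 : ∫ ω, ξY ω ∂P = 0)
    -- `ε + ξ_Y ⫫ ψ` where `ε = Y - ψ`:
    (hindep : IndepFun (fun ω => (Y ω - ψ ω) + ξY ω) ψ P)
    -- `F_{ξ_ψ}` dominates `F_{ξ_Y + ε}` at the second order:
    (hdom : SecondOrderDom (P.map ξψ) (P.map (fun ω => ξY ω + (Y ω - ψ ω)))) :
    (∫ ω, (Y ω + ξY ω) ∂P = ∫ ω, (ψ ω + ξψ ω) ∂P) ∧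
      ∀ y : ℝ, ∫ ω, max (y - (ψ ω + ξψ ω)) 0 ∂P ≤ ∫ ω, max (y - (Y ω + ξY ω)) 0 ∂P := by
  refine ⟨by rw [integral_add hYi hξYi, integral_add hψi hξψi, hmean, hξY0, hξψ0], fun y => ?_⟩
  have hη : Integrable (fun ω => (Y ω - ψ ω) + ξY ω) P := (hYi.sub hψi).add hξYi
  have hsum (ω : Ω) : ψ ω + ((Y ω - ψ ω) + ξY ω) = Y ω + ξY ω := by ring
  simp_rw [add_comm (ξY _)] at hdom
  simpa only [hsum] using integral_max_sub_add_le_of_indepFun hψi.aemeasurable hξψi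
    hη.aemeasurable (by simp only [hsum]; exact hYi.add hξYi) hξψindep hindep hdom y

/-- Proposition 4 of the paper (robustness to measurement errors): if `(Y, ψ)` satisfy H₀
(i.e. `E[Y] = E[ψ]` and `E[(y-Y)⁺] ≥ E[(y-ψ)⁺]` for all `y`), the measurement errors are
classical, `ε + ξ_Y` is independent of `ψ` and `F_{ξ_ψ}` dominates `F_{ξ_Y + ε}` at the
second order, then `Ŷ = Y + ξ_Y` and `ψ̂ = ψ + ξ_ψ` also satisfy H₀. -/
theorem measurement_error_robustness
    {Ω : Type*} [MeasurableSpace Ω] (P : Measure Ω) [IsProbabilityMeasure P]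
    {Y ψ ξψ ξY : Ω → ℝ}
    (hYm : Measurable Y) (hψm : Measurable ψ) (hξψm : Measurable ξψ) (hξYm : Measurable ξY)
    (hYi : Integrable Y P) (hψi : Integrable ψ P)
    (hξψi : Integrable ξψ P) (hξYi : Integrable ξY P)
    -- `(Y, ψ)` satisfy H₀:
    (hmean : ∫ ω, Y ω ∂P = ∫ ω, ψ ω ∂P)
    (hineq : ∀ y : ℝ, ∫ ω, max (y - ψ ω) 0 ∂P ≤ ∫ ω, max (y - Y ω) 0 ∂P)
    -- classical measurement errors:
    (hξψindep : IndepFun ξψ ψ P) (hξψ0 : ∫ ω, ξψ ω ∂P = 0)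
    (hξYindep : IndepFun ξY Y P) (hξY0 : ∫ ω, ξY ω ∂P = 0)
    -- `ε + ξ_Y ⫫ ψ` where `ε = Y - ψ`:
    (hindep : IndepFun (fun ω => (Y ω - ψ ω) + ξY ω) ψ P)
    -- `F_{ξ_ψ}` dominates `F_{ξ_Y + ε}` at the second order:
    (hdom : SecondOrderDom (P.map ξψ) (P.map (fun ω => ξY ω + (Y ω - ψ ω)))) :
    (∫ ω, (Y ω + ξY ω) ∂P = ∫ ω, (ψ ω + ξψ ω) ∂P) ∧
      ∀ y : ℝ, ∫ ω, max (y - (ψ ω + ξψ ω)) 0 ∂P ≤ ∫ ω, max (y - (Y ω + ξY ω)) 0 ∂P :=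
  measurement_error_robustness_general P hYi hψi hξψi hξYi hmean hξψindep hξψ0 hξY0 hindep hdom
end

section
/- Let ψ be an integrable real random variable, and let ξ₁ and ξ₂ be integrable real random variables, each independent of ψ, such that E[ξ₁] = E[ξ₂] and the cdf F_{ξ₁} dominates the cdf F_{ξ₂} at the second order. Then for every y ∈ ℝ, E[(y − ψ − ξ₂)⁺] ≥ E[(y − ψ − ξ₁)⁺]. -/
/-!
For `ψ` independent of `ξ`, Fubini and the layer-cake identity
`E[(c - X)⁺] = ∫_{-∞}^c F_X(s) ds` give
`E[(y - ψ - ξ)⁺] = E[∫_{-∞}^{y - ψ} F_ξ(s) ds]`, so second-order dominance of `F_{ξ₁}` over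
`F_{ξ₂}` compares the two expectations pointwise in the value of `ψ`.
-/

open MeasureTheory ProbabilityTheory

open Set

theorem lintegral_measure_Iic_eq_lintegral_ofReal_sub (μ : Measure ℝ) [SFinite μ] (c : ℝ) :
    ∫⁻ s in Iic c, μ (Iic s) = ∫⁻ x, ENNReal.ofReal (c - x) ∂μ := by
  have hA : MeasurableSet {p : ℝ × ℝ | p.2 ≤ p.1} :=
    measurableSet_le measurable_snd measurable_fst
  calc ∫⁻ s in Iic c, μ (Iic s) = (volume.restrict (Iic c)).prod μ {p | p.2 ≤ p.1} :=
        (Measure.prod_apply hA).symm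
    _ = ∫⁻ x, ENNReal.ofReal (c - x) ∂μ := by
      rw [Measure.prod_apply_symm hA]
      refine lintegral_congr fun x => ?_
      rw [show (fun s => (s, x)) ⁻¹' {p : ℝ × ℝ | p.2 ≤ p.1} = Ici x from rfl,
        Measure.restrict_apply measurableSet_Ici, Ici_inter_Iic, Real.volume_Icc]

theorem integral_max_sub_zero_eq_setIntegral_Iic_cdf (μ : Measure ℝ) [IsProbabilityMeasure μ]
    (c : ℝ) :
    ∫ x, max (c - x) 0 ∂μ = ∫ s in Iic c, cdf μ s := by
  rw [integral_eq_lintegral_of_nonneg_ae (f := fun x => max (c - x) 0)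
      (ae_of_all _ fun x => le_max_right _ _) (by fun_prop),
    integral_eq_lintegral_of_nonneg_ae (ae_of_all _ (cdf_nonneg μ))
      (monotone_cdf μ).measurable.aestronglyMeasurable]
  simp only [ENNReal.ofReal_max, ENNReal.ofReal_zero, zero_le, max_eq_left, ofReal_cdf,
    lintegral_measure_Iic_eq_lintegral_ofReal_sub]

theorem ProbabilityTheory.IndepFun.integral_comp_eq_integral_integral_map
    {Ω α β E : Type*} [MeasurableSpace Ω] [MeasurableSpace α] [MeasurableSpace β]
    [NormedAddCommGroup E] [NormedSpace ℝ E] {P : Measure Ω} [IsFiniteMeasure P]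
    {X : Ω → α} {Y : Ω → β} (hXY : IndepFun X Y P) (hX : AEMeasurable X P)
    (hY : AEMeasurable Y P) {f : α × β → E} (hf : Integrable f ((P.map X).prod (P.map Y))) :
    ∫ ω, f (X ω, Y ω) ∂P = ∫ x, ∫ y, f (x, y) ∂(P.map Y) ∂(P.map X) := by
  have hmap := hXY.map_prod_eq_prod_map_map hX hY
  rw [← integral_prod f hf, ← hmap, integral_map (hX.prodMk hY) (hmap ▸ hf.1)]

section Shortfall

variable {Ω : Type*} [MeasurableSpace Ω] {P : Measure Ω} [IsProbabilityMeasure P]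
  {ψ ξ : Ω → ℝ} {y : ℝ}

theorem integrable_max_sub_sub_zero_prod_map (hψ : AEMeasurable ψ P) (hξ : AEMeasurable ξ P)
    (hψξ : IndepFun ψ ξ P) (hint : Integrable (fun ω => max (y - ψ ω - ξ ω) 0) P) :
    Integrable (fun p : ℝ × ℝ => max (y - p.1 - p.2) 0) ((P.map ψ).prod (P.map ξ)) := by
  rw [← hψξ.map_prod_eq_prod_map_map hψ hξ,
    integrable_map_measure (by fun_prop) (hψ.prodMk hξ)]
  exact hint

theorem integral_max_sub_sub_zero_eq_integral_setIntegral_Iic_cdf (hψ : AEMeasurable ψ P)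
    (hξ : AEMeasurable ξ P) (hψξ : IndepFun ψ ξ P)
    (hint : Integrable (fun ω => max (y - ψ ω - ξ ω) 0) P) :
    ∫ ω, max (y - ψ ω - ξ ω) 0 ∂P = ∫ a, (∫ s in Iic (y - a), cdf (P.map ξ) s) ∂(P.map ψ) := by
  have := Measure.isProbabilityMeasure_map hξ
  rw [hψξ.integral_comp_eq_integral_integral_map hψ hξ
    (f := fun p : ℝ × ℝ => max (y - p.1 - p.2) 0)
    (integrable_max_sub_sub_zero_prod_map hψ hξ hψξ hint)]
  simp only [sub_sub, ← integral_max_sub_zero_eq_setIntegral_Iic_cdf]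

theorem integrable_setIntegral_Iic_cdf_map (hψ : AEMeasurable ψ P) (hξ : AEMeasurable ξ P)
    (hψξ : IndepFun ψ ξ P) (hint : Integrable (fun ω => max (y - ψ ω - ξ ω) 0) P) :
    Integrable (fun a => ∫ s in Iic (y - a), cdf (P.map ξ) s) (P.map ψ) := by
  have := Measure.isProbabilityMeasure_map hξ
  simp only [← integral_max_sub_zero_eq_setIntegral_Iic_cdf]
  exact (integrable_max_sub_sub_zero_prod_map hψ hξ hψξ hint).integral_prod_left

end Shortfall

theorem pos_part_expectation_mono_of_secondOrderDom_general
    {Ω : Type*} [MeasurableSpace Ω] (P : Measure Ω) [IsProbabilityMeasure P]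
    {ψ ξ₁ ξ₂ : Ω → ℝ}
    (hψm : Measurable ψ) (hξ₁m : Measurable ξ₁) (hξ₂m : Measurable ξ₂)
    (hψi : Integrable ψ P) (hξ₁i : Integrable ξ₁ P) (hξ₂i : Integrable ξ₂ P)
    (hξ₁indep : IndepFun ξ₁ ψ P) (hξ₂indep : IndepFun ξ₂ ψ P)
    (hdom : SecondOrderDom (P.map ξ₁) (P.map ξ₂)) :
    ∀ y : ℝ, ∫ ω, max (y - ψ ω - ξ₁ ω) 0 ∂P ≤ ∫ ω, max (y - ψ ω - ξ₂ ω) 0 ∂P := by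
  intro y
  have hψ : AEMeasurable ψ P := hψm.aemeasurable
  have hint₁ := (((integrable_const y).sub hψi).sub hξ₁i).pos_part
  have hint₂ := (((integrable_const y).sub hψi).sub hξ₂i).pos_part
  rw [integral_max_sub_sub_zero_eq_integral_setIntegral_Iic_cdf hψ hξ₁m.aemeasurable
      hξ₁indep.symm hint₁,
    integral_max_sub_sub_zero_eq_integral_setIntegral_Iic_cdf hψ hξ₂m.aemeasurable
      hξ₂indep.symm hint₂]
  exact integral_mono
    (integrable_setIntegral_Iic_cdf_map hψ hξ₁m.aemeasurable hξ₁indep.symm hint₁)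
    (integrable_setIntegral_Iic_cdf_map hψ hξ₂m.aemeasurable hξ₂indep.symm hint₂)
    fun a => hdom (y - a)

/-- If `ξ₁, ξ₂` are integrable, each independent of `ψ`, with `E[ξ₁] = E[ξ₂]` and `F_{ξ₁}`
dominating `F_{ξ₂}` at the second order, then for every `y`,
`E[(y - ψ - ξ₂)⁺] ≥ E[(y - ψ - ξ₁)⁺]`. -/
theorem pos_part_expectation_mono_of_secondOrderDom
    {Ω : Type*} [MeasurableSpace Ω] (P : Measure Ω) [IsProbabilityMeasure P]
    {ψ ξ₁ ξ₂ : Ω → ℝ}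
    (hψm : Measurable ψ) (hξ₁m : Measurable ξ₁) (hξ₂m : Measurable ξ₂)
    (hψi : Integrable ψ P) (hξ₁i : Integrable ξ₁ P) (hξ₂i : Integrable ξ₂ P)
    (hξ₁indep : IndepFun ξ₁ ψ P) (hξ₂indep : IndepFun ξ₂ ψ P)
    (hmean : ∫ ω, ξ₁ ω ∂P = ∫ ω, ξ₂ ω ∂P)
    (hdom : SecondOrderDom (P.map ξ₁) (P.map ξ₂)) :
    ∀ y : ℝ, ∫ ω, max (y - ψ ω - ξ₁ ω) 0 ∂P ≤ ∫ ω, max (y - ψ ω - ξ₂ ω) 0 ∂P :=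
  pos_part_expectation_mono_of_secondOrderDom_general P hψm hξ₁m hξ₂m hψi hξ₁i hξ₂i hξ₁indep
    hξ₂indep hdom
end

section
/- Let ψ, ε, ξ_Y, ξ_ψ be square-integrable real random variables on a common probability space with Cov(ε + ξ_Y, ψ) = 0, Cov(ξ_ψ, ψ) = 0, Cov(ξ_ψ, ε + ξ_Y) ≥ 0, and Var(ψ) ≥ λ̲ · Var(ξ_ψ) for some λ̲ ≥ 0. Define Ŷ = ψ + ε + ξ_Y and ψ̂ = ψ + ξ_ψ, and assume Var(ψ̂) > 0. Then the slope of the theoretical linear regression of Ŷ on ψ̂, namely β = Cov(Ŷ, ψ̂)/Var(ψ̂), satisfies β ≥ 1 − 1/(1 + λ̲). -/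
/-!
Write `E = ε + ξ_Y`. Since `ψ` is uncorrelated with both `E` and `ξ_ψ`, bilinearity gives
`Cov(Ŷ, ψ̂) = Var ψ + Cov(ξ_ψ, E)` and `Var ψ̂ = Var ψ + Var ξ_ψ`. The bound then reduces to the
elementary inequality `λ / (1 + λ) ≤ (a + c) / (a + b)` for `c ≥ 0` and `a ≥ λ b`.
-/

open MeasureTheory ProbabilityTheory

noncomputable def cov {Ω : Type*} [MeasurableSpace Ω] (P : Measure Ω) (f g : Ω → ℝ) : ℝ :=
  ∫ ω, f ω * g ω ∂P - (∫ ω, f ω ∂P) * (∫ ω, g ω ∂P)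

theorem one_sub_one_div_one_add_le_add_div_add {lam a b c : ℝ} (hlam : 0 ≤ lam) (hc : 0 ≤ c)
    (hab : lam * b ≤ a) (hpos : 0 < a + b) :
    1 - 1 / (1 + lam) ≤ (a + c) / (a + b) := by
  have hlam' : 0 < 1 + lam := by linarith
  rw [show 1 - 1 / (1 + lam) = lam / (1 + lam) by field_simp; ring,
    div_le_div_iff₀ hlam' hpos]
  nlinarith

section Covariance

variable {Ω : Type*} [MeasurableSpace Ω] {P : Measure Ω}

theorem cov_eq_covariance [IsProbabilityMeasure P] {f g : Ω → ℝ} (hf : MemLp f 2 P)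
    (hg : MemLp g 2 P) : cov P f g = covariance f g P :=
  (covariance_eq_sub hf hg).symm

variable [IsFiniteMeasure P] {X Y Z : Ω → ℝ}

theorem variance_add_of_covariance_eq_zero (hX : MemLp X 2 P) (hY : MemLp Y 2 P)
    (h : covariance X Y P = 0) : variance (X + Y) P = variance X P + variance Y P := by
  rw [variance_add hX hY, h]
  ring

theorem covariance_add_add_of_covariance_eq_zero (hX : MemLp X 2 P) (hY : MemLp Y 2 P)
    (hZ : MemLp Z 2 P) (hYX : covariance Y X P = 0) (hZX : covariance Z X P = 0) :
    covariance (X + Y) (X + Z) P = variance X P + covariance Z Y P := by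
  rw [covariance_add_left hX hY (hX.add hZ), covariance_add_right hX hX hZ,
    covariance_add_right hY hX hZ, covariance_self hX.aemeasurable, covariance_comm X Z,
    covariance_comm Y Z, hYX, hZX]
  ring

end Covariance

/-- Proposition 7.2 of the paper: if `Cov(ε + ξ_Y, ψ) = 0`, `Cov(ξ_ψ, ψ) = 0`,
`Cov(ξ_ψ, ε + ξ_Y) ≥ 0` and `Var(ψ) ≥ λ̲ Var(ξ_ψ)` with `λ̲ ≥ 0`, then the slope
`β = Cov(Ŷ, ψ̂)/Var(ψ̂)` of the theoretical linear regression of `Ŷ = ψ + ε + ξ_Y` on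
`ψ̂ = ψ + ξ_ψ` satisfies `β ≥ 1 - 1/(1 + λ̲)`. -/
theorem regression_slope_lower_bound
    {Ω : Type*} [MeasurableSpace Ω] (P : Measure Ω) [IsProbabilityMeasure P]
    {ψ ε ξY ξψ : Ω → ℝ}
    (hψ : MemLp ψ 2 P) (hε : MemLp ε 2 P) (hξY : MemLp ξY 2 P) (hξψ : MemLp ξψ 2 P)
    (lam : ℝ) (hlam : 0 ≤ lam)
    (hcov1 : cov P (fun ω => ε ω + ξY ω) ψ = 0)
    (hcov2 : cov P ξψ ψ = 0)
    (hcov3 : 0 ≤ cov P ξψ (fun ω => ε ω + ξY ω))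
    (hvar : lam * variance ξψ P ≤ variance ψ P)
    (hpos : 0 < variance (fun ω => ψ ω + ξψ ω) P) :
    1 - 1 / (1 + lam) ≤
      cov P (fun ω => ψ ω + ε ω + ξY ω) (fun ω => ψ ω + ξψ ω) /
        variance (fun ω => ψ ω + ξψ ω) P := by
  have hE : MemLp (fun ω => ε ω + ξY ω) 2 P := hε.add hξY
  rw [cov_eq_covariance hE hψ] at hcov1
  rw [cov_eq_covariance hξψ hψ] at hcov2
  rw [cov_eq_covariance hξψ hE] at hcov3
  have hnum : cov P (fun ω => ψ ω + ε ω + ξY ω) (fun ω => ψ ω + ξψ ω)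
      = variance ψ P + covariance ξψ (fun ω => ε ω + ξY ω) P := by
    simp only [add_assoc]
    exact (cov_eq_covariance (hψ.add hE) (hψ.add hξψ)).trans
      (covariance_add_add_of_covariance_eq_zero hψ hE hξψ hcov1 hcov2)
  have hden : variance (fun ω => ψ ω + ξψ ω) P = variance ψ P + variance ξψ P :=
    variance_add_of_covariance_eq_zero hψ hξψ (by rw [covariance_comm, hcov2])
  rw [hden] at hpos
  rw [hnum, hden]
  exact one_sub_one_div_one_add_le_add_div_add hlam hcov3 hvar hpos
end

section
/- Let ψ_L ≤ ψ_U be integrable real random variables on a common probability space and Y an integrable real random variable. For b ∈ ℝ define ψ^b = ψ_U·1{ψ_U < b} + max(b, ψ_L)·1{ψ_U ≥ b}, with ψ^{−∞} = ψ_L and ψ^{∞} = ψ_U, and let F^b denote the cdf of ψ^b and 𝓕_B = {F^b : b ∈ ℝ ∪ {−∞, +∞}}. If E[ψ_L] ≤ E[Y] ≤ E[ψ_U], then there exists a unique F* ∈ 𝓕_B such that ∫ u dF*(u) = E[Y]. -/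
/-!
For `ψ_L ≤ ψ_U`, `ψ^b = min ψ_U (max b ψ_L)`, so the functions `ψ_L`, `ψ^b` (`b ∈ ℝ`) and `ψ_U`
form a pointwise chain. Along it the mean `b ↦ E[ψ^b]` is continuous and runs from `E[ψ_L]`
(as `b → -∞`) to `E[ψ_U]` (as `b → ∞`), by dominated convergence with dominating function
`max |ψ_L| |ψ_U|`; the intermediate value theorem gives existence. Two comparable integrable
functions with the same mean agree almost everywhere, hence have the same law: this gives uniqueness.
-/

open MeasureTheory ProbabilityTheory

/-- `ψ^b = ψ_U·1{ψ_U < b} + max(b, ψ_L)·1{ψ_U ≥ b}`. -/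
noncomputable def psiB {Ω : Type*} (ψL ψU : Ω → ℝ) (b : ℝ) (ω : Ω) : ℝ :=
  if ψU ω < b then ψU ω else max b (ψL ω)

/-- The family `𝓕_B` of candidate belief distributions: the laws of `ψ^b` for `b ∈ ℝ`,
together with the laws of `ψ^{-∞} = ψ_L` and `ψ^{∞} = ψ_U`. -/
def FB {Ω : Type*} [MeasurableSpace Ω] (P : Measure Ω) (ψL ψU : Ω → ℝ) :
    Set (Measure ℝ) :=
  {μ | (∃ b : ℝ, μ = P.map (psiB ψL ψU b)) ∨ μ = P.map ψL ∨ μ = P.map ψU}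

open Filter Set Topology

section Chain

variable {α : Type*} [MeasurableSpace α] {μ : Measure α}

theorem map_eq_map_of_le_of_integral_eq {f g : α → ℝ} (hf : Integrable f μ)
    (hg : Integrable g μ) (hfg : f ≤ g) (h : ∫ a, f a ∂μ = ∫ a, g a ∂μ) :
    μ.map f = μ.map g :=
  Measure.map_congr ((integral_eq_iff_of_ae_le hf hg (ae_of_all _ hfg)).1 h)

theorem IsChain.map_eq_map_of_integral_eq {S : Set (α → ℝ)} (hS : IsChain (· ≤ ·) S)
    (hint : ∀ f ∈ S, Integrable f μ) {f g : α → ℝ} (hf : f ∈ S) (hg : g ∈ S)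
    (h : ∫ a, f a ∂μ = ∫ a, g a ∂μ) : μ.map f = μ.map g := by
  rcases hS.total hf hg with hfg | hgf
  · exact map_eq_map_of_le_of_integral_eq (hint f hf) (hint g hg) hfg h
  · exact (map_eq_map_of_le_of_integral_eq (hint g hg) (hint f hf) hgf h.symm).symm

end Chain

section PsiB

variable {Ω : Type*} {ψL ψU : Ω → ℝ}

theorem psiB_eq_min_max (hle : ψL ≤ ψU) (b : ℝ) (ω : Ω) :
    psiB ψL ψU b ω = min (ψU ω) (max b (ψL ω)) := by
  unfold psiB
  split_ifs with h
  · exact (min_eq_left (le_max_of_le_left h.le)).symm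
  · exact (min_eq_right (max_le (le_of_not_gt h) (hle ω))).symm

theorem psiB_le_right (hle : ψL ≤ ψU) (b : ℝ) : psiB ψL ψU b ≤ ψU := fun ω => by
  rw [psiB_eq_min_max hle]
  exact min_le_left _ _

theorem left_le_psiB (hle : ψL ≤ ψU) (b : ℝ) : ψL ≤ psiB ψL ψU b := fun ω => by
  rw [psiB_eq_min_max hle]
  exact le_min (hle ω) (le_max_right _ _)

theorem monotone_psiB (hle : ψL ≤ ψU) : Monotone (psiB ψL ψU) := fun b b' hbb' ω => by
  simp only [psiB_eq_min_max hle]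
  gcongr

theorem continuous_psiB_apply (hle : ψL ≤ ψU) (ω : Ω) :
    Continuous fun b => psiB ψL ψU b ω := by
  simp only [psiB_eq_min_max hle]
  fun_prop

theorem tendsto_psiB_apply_atTop (hle : ψL ≤ ψU) (ω : Ω) :
    Tendsto (fun b => psiB ψL ψU b ω) atTop (𝓝 (ψU ω)) := by
  refine tendsto_const_nhds.congr' ?_
  filter_upwards [eventually_ge_atTop (ψU ω)] with b hb
  rw [psiB_eq_min_max hle, min_eq_left (le_max_of_le_left hb)]

theorem tendsto_psiB_apply_atBot (hle : ψL ≤ ψU) (ω : Ω) :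
    Tendsto (fun b => psiB ψL ψU b ω) atBot (𝓝 (ψL ω)) := by
  refine tendsto_const_nhds.congr' ?_
  filter_upwards [eventually_le_atBot (ψL ω)] with b hb
  rw [psiB_eq_min_max hle, max_eq_right hb, min_eq_right (hle ω)]

theorem abs_psiB_le (hle : ψL ≤ ψU) (b : ℝ) (ω : Ω) :
    |psiB ψL ψU b ω| ≤ max |ψL ω| |ψU ω| :=
  abs_le_max_abs_abs (left_le_psiB hle b ω) (psiB_le_right hle b ω)

variable [MeasurableSpace Ω] {P : Measure Ω}

theorem integrable_psiB (hle : ψL ≤ ψU) (hψLi : Integrable ψL P) (hψUi : Integrable ψU P)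
    (b : ℝ) : Integrable (psiB ψL ψU b) P := by
  refine (hψLi.abs.sup hψUi.abs).mono' ?_ (ae_of_all _ fun ω => abs_psiB_le hle b ω)
  rw [show psiB ψL ψU b = fun ω => min (ψU ω) (max b (ψL ω)) from
    funext (psiB_eq_min_max hle b)]
  exact (hψUi.aemeasurable.min (aemeasurable_const.max hψLi.aemeasurable)).aestronglyMeasurable

theorem continuous_integral_psiB (hle : ψL ≤ ψU) (hψLi : Integrable ψL P)
    (hψUi : Integrable ψU P) : Continuous fun b => ∫ ω, psiB ψL ψU b ω ∂P :=
  continuous_of_dominated (fun b => (integrable_psiB hle hψLi hψUi b).aestronglyMeasurable)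
    (fun b => ae_of_all _ (abs_psiB_le hle b)) (hψLi.abs.sup hψUi.abs)
    (ae_of_all _ (continuous_psiB_apply hle))

theorem tendsto_integral_psiB_atTop (hle : ψL ≤ ψU) (hψLi : Integrable ψL P)
    (hψUi : Integrable ψU P) :
    Tendsto (fun b => ∫ ω, psiB ψL ψU b ω ∂P) atTop (𝓝 (∫ ω, ψU ω ∂P)) :=
  tendsto_integral_filter_of_dominated_convergence _
    (.of_forall fun b => (integrable_psiB hle hψLi hψUi b).aestronglyMeasurable)
    (.of_forall fun b => ae_of_all _ (abs_psiB_le hle b)) (hψLi.abs.sup hψUi.abs)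
    (ae_of_all _ (tendsto_psiB_apply_atTop hle))

theorem tendsto_integral_psiB_atBot (hle : ψL ≤ ψU) (hψLi : Integrable ψL P)
    (hψUi : Integrable ψU P) :
    Tendsto (fun b => ∫ ω, psiB ψL ψU b ω ∂P) atBot (𝓝 (∫ ω, ψL ω ∂P)) :=
  tendsto_integral_filter_of_dominated_convergence _
    (.of_forall fun b => (integrable_psiB hle hψLi hψUi b).aestronglyMeasurable)
    (.of_forall fun b => ae_of_all _ (abs_psiB_le hle b)) (hψLi.abs.sup hψUi.abs)
    (ae_of_all _ (tendsto_psiB_apply_atBot hle))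

theorem exists_integral_psiB_eq (hle : ψL ≤ ψU) (hψLi : Integrable ψL P)
    (hψUi : Integrable ψU P) {t : ℝ} (hlow : ∫ ω, ψL ω ∂P < t) (hup : t < ∫ ω, ψU ω ∂P) :
    ∃ b, ∫ ω, psiB ψL ψU b ω ∂P = t := by
  obtain ⟨b₁, hb₁⟩ := ((tendsto_integral_psiB_atBot hle hψLi hψUi).eventually_lt_const hlow).exists
  obtain ⟨b₂, hb₂⟩ := ((tendsto_integral_psiB_atTop hle hψLi hψUi).eventually_const_lt hup).exists
  exact intermediate_value_univ b₁ b₂ (continuous_integral_psiB hle hψLi hψUi) ⟨hb₁.le, hb₂.le⟩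

end PsiB

section Family

variable {Ω : Type*} {ψL ψU : Ω → ℝ}

def psiFamily (ψL ψU : Ω → ℝ) : Set (Ω → ℝ) :=
  insert ψL (insert ψU (range (psiB ψL ψU)))

theorem isChain_psiFamily (hle : ψL ≤ ψU) : IsChain (· ≤ ·) (psiFamily ψL ψU) := by
  refine ((monotone_psiB hle).isChain_range.insert ?_).insert ?_
  · rintro _ ⟨b, rfl⟩ -
    exact .inr (psiB_le_right hle b)
  · rintro _ (rfl | ⟨b, rfl⟩) -
    exacts [.inl hle, .inl (left_le_psiB hle b)]

variable [MeasurableSpace Ω] {P : Measure Ω}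

theorem integrable_of_mem_psiFamily (hle : ψL ≤ ψU) (hψLi : Integrable ψL P)
    (hψUi : Integrable ψU P) : ∀ f ∈ psiFamily ψL ψU, Integrable f P := by
  rintro _ (rfl | rfl | ⟨b, rfl⟩)
  exacts [hψLi, hψUi, integrable_psiB hle hψLi hψUi b]

theorem FB_eq_image_psiFamily : FB P ψL ψU = (fun f => P.map f) '' psiFamily ψL ψU := by
  ext μ
  constructor
  · rintro (⟨b, rfl⟩ | rfl | rfl)
    exacts [⟨_, .inr (.inr ⟨b, rfl⟩), rfl⟩, ⟨_, .inl rfl, rfl⟩, ⟨_, .inr (.inl rfl), rfl⟩]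
  · rintro ⟨f, rfl | rfl | ⟨b, rfl⟩, rfl⟩
    exacts [.inr (.inl rfl), .inr (.inr rfl), .inl ⟨b, rfl⟩]

theorem exists_mem_psiFamily_integral_eq (hle : ψL ≤ ψU) (hψLi : Integrable ψL P)
    (hψUi : Integrable ψU P) {t : ℝ} (hlow : ∫ ω, ψL ω ∂P ≤ t) (hup : t ≤ ∫ ω, ψU ω ∂P) :
    ∃ f ∈ psiFamily ψL ψU, ∫ ω, f ω ∂P = t := by
  rcases hlow.eq_or_lt with hL | hL
  · exact ⟨ψL, .inl rfl, hL⟩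
  rcases hup.eq_or_lt with hU | hU
  · exact ⟨ψU, .inr (.inl rfl), hU.symm⟩
  obtain ⟨b, hb⟩ := exists_integral_psiB_eq hle hψLi hψUi hL hU
  exact ⟨psiB ψL ψU b, .inr (.inr ⟨b, rfl⟩), hb⟩

end Family

theorem exists_unique_Fstar_general
    {Ω Ω' : Type*} [MeasurableSpace Ω] [MeasurableSpace Ω']
    (P : Measure Ω) (P' : Measure Ω')
    {ψL ψU : Ω → ℝ} {Y : Ω' → ℝ}
    (hψLi : Integrable ψL P) (hψUi : Integrable ψU P)
    (hle : ∀ ω, ψL ω ≤ ψU ω)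
    (hlow : ∫ ω, ψL ω ∂P ≤ ∫ ω, Y ω ∂P')
    (hup : ∫ ω, Y ω ∂P' ≤ ∫ ω, ψU ω ∂P) :
    ∃! μ : Measure ℝ, μ ∈ FB P ψL ψU ∧ ∫ x : ℝ, x ∂μ = ∫ ω, Y ω ∂P' := by
  have hint := integrable_of_mem_psiFamily hle hψLi hψUi
  have mean_map : ∀ f ∈ psiFamily ψL ψU, ∫ x, x ∂(P.map f) = ∫ ω, f ω ∂P := fun f hf =>
    integral_map (hint f hf).aemeasurable aestronglyMeasurable_id
  obtain ⟨f, hf, hfY⟩ := exists_mem_psiFamily_integral_eq hle hψLi hψUi hlow hup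
  simp only [FB_eq_image_psiFamily]
  refine ⟨P.map f, ⟨mem_image_of_mem _ hf, (mean_map f hf).trans hfY⟩, ?_⟩
  rintro _ ⟨⟨g, hg, rfl⟩, hgY⟩
  rw [mean_map g hg] at hgY
  exact (isChain_psiFamily hle).map_eq_map_of_integral_eq hint hg hf (hgY.trans hfY.symm)

/-- First part of Proposition 8 of the paper: if `E[ψ_L] ≤ E[Y] ≤ E[ψ_U]`, there exists a
unique `F* ∈ 𝓕_B` whose mean equals `E[Y]`. -/
theorem exists_unique_Fstar
    {Ω Ω' : Type*} [MeasurableSpace Ω] [MeasurableSpace Ω']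
    (P : Measure Ω) (P' : Measure Ω')
    [IsProbabilityMeasure P] [IsProbabilityMeasure P']
    {ψL ψU : Ω → ℝ} {Y : Ω' → ℝ}
    (hψLm : Measurable ψL) (hψUm : Measurable ψU)
    (hψLi : Integrable ψL P) (hψUi : Integrable ψU P)
    (hle : ∀ ω, ψL ω ≤ ψU ω)
    (hYm : Measurable Y) (hYi : Integrable Y P')
    (hlow : ∫ ω, ψL ω ∂P ≤ ∫ ω, Y ω ∂P')
    (hup : ∫ ω, Y ω ∂P' ≤ ∫ ω, ψU ω ∂P) :
    ∃! μ : Measure ℝ, μ ∈ FB P ψL ψU ∧ ∫ x : ℝ, x ∂μ = ∫ ω, Y ω ∂P' :=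
  exists_unique_Fstar_general P P' hψLi hψUi hle hlow hup
end

section
/- Let l ≤ u be real numbers and for b ∈ ℝ define φ^b(l, u) = u·1{u < b} + max(b, l)·1{u ≥ b}. Then: (a) for all b, b' ∈ ℝ, |φ^b(l, u) − φ^{b'}(l, u)| ≤ |b − b'|; (b) consequently, for integrable real random variables ψ_L ≤ ψ_U on a common probability space, the map b ↦ E[ψ^b], where ψ^b = φ^b(ψ_L, ψ_U), is 1-Lipschitz (hence continuous) and nondecreasing on ℝ, with lim_{b → −∞} E[ψ^b] = E[ψ_L] and lim_{b → +∞} E[ψ^b] = E[ψ_U]. -/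
/-! For `l ≤ u`, `φ^b(l, u) = min u (max b l)` is the projection of `b` onto `[l, u]`, so it is
1-Lipschitz and nondecreasing in `b`, equals `l` for `b ≤ l` and `u` for `b > u`. Integrating
preserves the Lipschitz bound and monotonicity, and since `|φ^b(ψ_L, ψ_U)| ≤ max |ψ_L| |ψ_U|`
the limits follow by dominated convergence. -/

open MeasureTheory Filter Topology

/-- `φ^b(l, u) = u·1{u < b} + max(b, l)·1{u ≥ b}`. -/
noncomputable def phiB (b l u : ℝ) : ℝ := if u < b then u else max b l

lemma phiB_eq_min_max {b l u : ℝ} (h : l ≤ u) : phiB b l u = min u (max b l) := by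
  unfold phiB
  rcases lt_or_ge u b with hb | hb
  · rw [if_pos hb, max_eq_left (h.trans hb.le), min_eq_left hb.le]
  · rw [if_neg hb.not_gt, min_eq_right (max_le hb h)]

lemma lipschitzWith_phiB {l u : ℝ} (h : l ≤ u) : LipschitzWith 1 fun b => phiB b l u := by
  simp only [phiB_eq_min_max h]
  exact (LipschitzWith.id.max_const l).const_min u

lemma monotone_phiB {l u : ℝ} (h : l ≤ u) : Monotone fun b => phiB b l u := by
  intro a b hab
  simp only [phiB_eq_min_max h]
  exact min_le_min_left u (max_le_max_right l hab)

lemma phiB_mem_Icc {b l u : ℝ} (h : l ≤ u) : phiB b l u ∈ Set.Icc l u := by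
  rw [phiB_eq_min_max h]
  exact ⟨le_min h (le_max_right b l), min_le_left u _⟩

lemma phiB_eventually_eq_atBot {l u : ℝ} (h : l ≤ u) : ∀ᶠ b in atBot, phiB b l u = l := by
  filter_upwards [eventually_le_atBot l] with b hb
  rw [phiB_eq_min_max h, max_eq_right hb, min_eq_right h]

lemma phiB_eventually_eq_atTop (l u : ℝ) : ∀ᶠ b in atTop, phiB b l u = u := by
  filter_upwards [eventually_gt_atTop u] with b hb
  exact if_pos hb

lemma lipschitzWith_integral {α Ω E : Type*} [PseudoMetricSpace α] [MeasurableSpace Ω]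
    [NormedAddCommGroup E] [NormedSpace ℝ E] {P : Measure Ω} [IsProbabilityMeasure P]
    {K : NNReal} {F : α → Ω → E} (hF : ∀ x, Integrable (F x) P)
    (hlip : ∀ ω, LipschitzWith K fun x => F x ω) :
    LipschitzWith K fun x => ∫ ω, F x ω ∂P := by
  rw [lipschitzWith_iff_dist_le_mul]
  intro x y
  rw [dist_eq_norm, ← integral_sub (hF x) (hF y)]
  calc ‖∫ ω, F x ω - F y ω ∂P‖ ≤ K * dist x y * P.real Set.univ :=
        norm_integral_le_of_norm_le_const <| ae_of_all _ fun ω => by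
          rw [← dist_eq_norm]
          exact (hlip ω).dist_le_mul x y
    _ = K * dist x y := by simp

section Integral

variable {Ω : Type*} [MeasurableSpace Ω] {P : Measure Ω} {ψL ψU : Ω → ℝ}

lemma integrable_phiB [IsFiniteMeasure P] (hψLi : Integrable ψL P) (hψUi : Integrable ψU P)
    (hle : ∀ ω, ψL ω ≤ ψU ω) (b : ℝ) : Integrable (fun ω => phiB b (ψL ω) (ψU ω)) P := by
  have hclamp : (fun ω => phiB b (ψL ω) (ψU ω)) = ψU ⊓ ((fun _ => b) ⊔ ψL) := by
    funext ω
    exact phiB_eq_min_max (hle ω)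
  rw [hclamp]
  exact hψUi.inf ((integrable_const b).sup hψLi)

lemma tendsto_integral_phiB [IsFiniteMeasure P] (hψLi : Integrable ψL P)
    (hψUi : Integrable ψU P) (hle : ∀ ω, ψL ω ≤ ψU ω) {l : Filter ℝ} [l.IsCountablyGenerated]
    {g : Ω → ℝ} (hg : ∀ ω, ∀ᶠ b in l, phiB b (ψL ω) (ψU ω) = g ω) :
    Tendsto (fun b => ∫ ω, phiB b (ψL ω) (ψU ω) ∂P) l (𝓝 (∫ ω, g ω ∂P)) := by
  refine tendsto_integral_filter_of_dominated_convergence (fun ω => max |ψL ω| |ψU ω|)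
    (Eventually.of_forall fun b => (integrable_phiB hψLi hψUi hle b).aestronglyMeasurable)
    (Eventually.of_forall fun b => ae_of_all _ fun ω => ?_)
    (hψLi.abs.sup hψUi.abs)
    (ae_of_all _ fun ω => tendsto_const_nhds.congr' ((hg ω).mono fun b hb => hb.symm))
  obtain ⟨hl, hu⟩ := phiB_mem_Icc (b := b) (hle ω)
  exact abs_le_max_abs_abs hl hu

end Integral

theorem psiB_mean_lipschitz_monotone_limits_general
    {Ω : Type*} [MeasurableSpace Ω] (P : Measure Ω) [IsProbabilityMeasure P]
    {ψL ψU : Ω → ℝ}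
    (hψLi : Integrable ψL P) (hψUi : Integrable ψU P)
    (hle : ∀ ω, ψL ω ≤ ψU ω) :
    (∀ l u b b' : ℝ, l ≤ u → |phiB b l u - phiB b' l u| ≤ |b - b'|) ∧
    LipschitzWith 1 (fun b : ℝ => ∫ ω, phiB b (ψL ω) (ψU ω) ∂P) ∧
    Continuous (fun b : ℝ => ∫ ω, phiB b (ψL ω) (ψU ω) ∂P) ∧
    Monotone (fun b : ℝ => ∫ ω, phiB b (ψL ω) (ψU ω) ∂P) ∧
    Tendsto (fun b : ℝ => ∫ ω, phiB b (ψL ω) (ψU ω) ∂P) atBot (nhds (∫ ω, ψL ω ∂P)) ∧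
    Tendsto (fun b : ℝ => ∫ ω, phiB b (ψL ω) (ψU ω) ∂P) atTop (nhds (∫ ω, ψU ω ∂P)) := by
  have hint := integrable_phiB hψLi hψUi hle
  have hlip : LipschitzWith 1 fun b : ℝ => ∫ ω, phiB b (ψL ω) (ψU ω) ∂P :=
    lipschitzWith_integral hint fun ω => lipschitzWith_phiB (hle ω)
  refine ⟨fun l u b b' h => ?_, hlip, hlip.continuous,
    fun a b hab => integral_mono (hint a) (hint b) fun ω => monotone_phiB (hle ω) hab,
    tendsto_integral_phiB hψLi hψUi hle fun ω => phiB_eventually_eq_atBot (hle ω),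
    tendsto_integral_phiB hψLi hψUi hle fun ω => phiB_eventually_eq_atTop (ψL ω) (ψU ω)⟩
  simpa only [Real.dist_eq, NNReal.coe_one, one_mul] using (lipschitzWith_phiB h).dist_le_mul b b'

/-- (a) For `l ≤ u`, `b ↦ φ^b(l, u)` is 1-Lipschitz; (b) consequently, for integrable
`ψ_L ≤ ψ_U`, the map `b ↦ E[ψ^b]` is 1-Lipschitz (hence continuous) and nondecreasing, with
limits `E[ψ_L]` at `-∞` and `E[ψ_U]` at `+∞`. -/
theorem psiB_mean_lipschitz_monotone_limits
    {Ω : Type*} [MeasurableSpace Ω] (P : Measure Ω) [IsProbabilityMeasure P]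
    {ψL ψU : Ω → ℝ}
    (hψLm : Measurable ψL) (hψUm : Measurable ψU)
    (hψLi : Integrable ψL P) (hψUi : Integrable ψU P)
    (hle : ∀ ω, ψL ω ≤ ψU ω) :
    (∀ l u b b' : ℝ, l ≤ u → |phiB b l u - phiB b' l u| ≤ |b - b'|) ∧
    LipschitzWith 1 (fun b : ℝ => ∫ ω, phiB b (ψL ω) (ψU ω) ∂P) ∧
    Continuous (fun b : ℝ => ∫ ω, phiB b (ψL ω) (ψU ω) ∂P) ∧
    Monotone (fun b : ℝ => ∫ ω, phiB b (ψL ω) (ψU ω) ∂P) ∧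
    Tendsto (fun b : ℝ => ∫ ω, phiB b (ψL ω) (ψU ω) ∂P) atBot (nhds (∫ ω, ψL ω ∂P)) ∧
    Tendsto (fun b : ℝ => ∫ ω, phiB b (ψL ω) (ψU ω) ∂P) atTop (nhds (∫ ω, ψU ω ∂P)) :=
  psiB_mean_lipschitz_monotone_limits_general P hψLi hψUi hle
end

section
/- Let ψ_L ≤ ψ_U be integrable real random variables, Y an integrable real random variable with E[ψ_L] ≤ E[Y] ≤ E[ψ_U], and let F* be the unique element of 𝓕_B with ∫ u dF*(u) = E[Y]. Then for every cumulative distribution function F of an integrable distribution satisfying F_{ψ_U} ≤ F ≤ F_{ψ_L} pointwise and ∫ u dF(u) = E[Y], one has ∫_{−∞}^t F*(y) dy ≤ ∫_{−∞}^t F(y) dy for all t ∈ ℝ; that is, F* dominates at the second order every such F. -/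
open MeasureTheory ProbabilityTheory

open Set

/-! The cdf of `F* = F^b` coincides with `F_{ψ_U}` below `b` and with `F_{ψ_L}` from `b` on, so
under `F_{ψ_U} ≤ F ≤ F_{ψ_L}` the difference `F* - F` changes sign at most once, from `≤ 0` to
`≥ 0`. By Tonelli, a probability measure `μ` with finite mean satisfies
`∫_{-∞}^t F_μ = ∫ (t - x)⁺ dμ = t - E μ + ∫_t^∞ (1 - F_μ)`. Left of the sign change the claim is
the integral of `F* ≤ F`; right of it, since the means agree, it is the integral of
`1 - F* ≤ 1 - F` over `[t, ∞)`. -/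

section SecondOrder

variable {μ : Measure ℝ}

lemma lintegral_Iic_measure_Iic [SFinite μ] (t : ℝ) :
    ∫⁻ s in Iic t, μ (Iic s) = ∫⁻ x, ENNReal.ofReal (t - x) ∂μ := by
  have hS : MeasurableSet {p : ℝ × ℝ | p.2 ≤ p.1} := measurableSet_le measurable_snd measurable_fst
  refine (Measure.prod_apply hS).symm.trans <|
    (Measure.prod_apply_symm hS).trans <| lintegral_congr fun x => ?_
  change volume.restrict (Iic t) (Ici x) = _
  rw [Measure.restrict_apply measurableSet_Ici, Ici_inter_Iic, Real.volume_Icc]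

lemma lintegral_Ici_measure_Ioi [SFinite μ] (t : ℝ) :
    ∫⁻ s in Ici t, μ (Ioi s) = ∫⁻ x, ENNReal.ofReal (x - t) ∂μ := by
  have hS : MeasurableSet {p : ℝ × ℝ | p.1 < p.2} := measurableSet_lt measurable_fst measurable_snd
  refine (Measure.prod_apply hS).symm.trans <|
    (Measure.prod_apply_symm hS).trans <| lintegral_congr fun x => ?_
  change volume.restrict (Ici t) (Iio x) = _
  rw [Measure.restrict_apply measurableSet_Iio, Iio_inter_Ici, Real.volume_Ico]

variable [IsProbabilityMeasure μ]

lemma one_sub_cdf (s : ℝ) : 1 - cdf μ s = μ.real (Ioi s) := by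
  rw [cdf_eq_real, ← compl_Iic, probReal_compl_eq_one_sub measurableSet_Iic]

lemma integral_Iic_cdf (t : ℝ) :
    ∫ s in Iic t, cdf μ s = (∫⁻ x, ENNReal.ofReal (t - x) ∂μ).toReal := by
  simp_rw [cdf_eq_real, measureReal_def]
  have hmono : Monotone fun s => μ (Iic s) := fun _ _ h => measure_mono (Iic_subset_Iic.2 h)
  rw [integral_toReal hmono.measurable.aemeasurable (ae_of_all _ fun _ => measure_lt_top _ _),
    lintegral_Iic_measure_Iic]

lemma integral_Ici_one_sub_cdf (t : ℝ) :
    ∫ s in Ici t, (1 - cdf μ s) = (∫⁻ x, ENNReal.ofReal (x - t) ∂μ).toReal := by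
  simp_rw [one_sub_cdf, measureReal_def]
  have hanti : Antitone fun s => μ (Ioi s) := fun _ _ h => measure_mono (Ioi_subset_Ioi h)
  rw [integral_toReal hanti.measurable.aemeasurable (ae_of_all _ fun _ => measure_lt_top _ _),
    lintegral_Ici_measure_Ioi]

lemma integral_Iic_cdf_sub_integral_Ici_one_sub_cdf (hμ : Integrable (fun x : ℝ => x) μ) (t : ℝ) :
    (∫ s in Iic t, cdf μ s) - ∫ s in Ici t, (1 - cdf μ s) = t - ∫ x, x ∂μ := by
  have h := integral_eq_lintegral_pos_part_sub_lintegral_neg_part ((integrable_const t).sub hμ)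
  simp only [Pi.sub_apply, neg_sub] at h
  rw [integral_Iic_cdf, integral_Ici_one_sub_cdf, ← h, integral_sub (integrable_const t) hμ]
  simp

lemma integrableOn_cdf_Iic (hμ : Integrable (fun x : ℝ => x) μ) (t : ℝ) :
    IntegrableOn (fun s => cdf μ s) (Iic t) := by
  simp_rw [IntegrableOn, cdf_eq_real, measureReal_def]
  have hmono : Monotone fun s => μ (Iic s) := fun _ _ h => measure_mono (Iic_subset_Iic.2 h)
  refine integrable_toReal_of_lintegral_ne_top hmono.measurable.aemeasurable ?_
  rw [lintegral_Iic_measure_Iic]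
  exact ((integrable_const t).sub hμ).lintegral_lt_top.ne

lemma integrableOn_one_sub_cdf_Ici (hμ : Integrable (fun x : ℝ => x) μ) (t : ℝ) :
    IntegrableOn (fun s => 1 - cdf μ s) (Ici t) := by
  simp_rw [IntegrableOn, one_sub_cdf, measureReal_def]
  have hanti : Antitone fun s => μ (Ioi s) := fun _ _ h => measure_mono (Ioi_subset_Ioi h)
  refine integrable_toReal_of_lintegral_ne_top hanti.measurable.aemeasurable ?_
  rw [lintegral_Ici_measure_Ioi]
  exact (hμ.sub (integrable_const t)).lintegral_lt_top.ne

variable {ν : Measure ℝ} [IsProbabilityMeasure ν]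

lemma integral_Iic_cdf_le_of_cdf_le (hμ : Integrable (fun x : ℝ => x) μ)
    (hν : Integrable (fun x : ℝ => x) ν) {t : ℝ} (h : ∀ s ≤ t, cdf μ s ≤ cdf ν s) :
    ∫ s in Iic t, cdf μ s ≤ ∫ s in Iic t, cdf ν s :=
  setIntegral_mono_on (integrableOn_cdf_Iic hμ t) (integrableOn_cdf_Iic hν t) measurableSet_Iic h

lemma integral_Iic_cdf_le_of_cdf_ge (hμ : Integrable (fun x : ℝ => x) μ)
    (hν : Integrable (fun x : ℝ => x) ν) (hmean : ∫ x, x ∂μ = ∫ x, x ∂ν) {t : ℝ}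
    (h : ∀ s ≥ t, cdf ν s ≤ cdf μ s) :
    ∫ s in Iic t, cdf μ s ≤ ∫ s in Iic t, cdf ν s := by
  have htail : ∫ s in Ici t, (1 - cdf μ s) ≤ ∫ s in Ici t, (1 - cdf ν s) :=
    setIntegral_mono_on (integrableOn_one_sub_cdf_Ici hμ t) (integrableOn_one_sub_cdf_Ici hν t)
      measurableSet_Ici fun s hs => sub_le_sub_left (h s hs) 1
  have hμt := integral_Iic_cdf_sub_integral_Ici_one_sub_cdf hμ t
  have hνt := integral_Iic_cdf_sub_integral_Ici_one_sub_cdf hν t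
  linarith

theorem integral_Iic_cdf_le_of_single_crossing (hμ : Integrable (fun x : ℝ => x) μ)
    (hν : Integrable (fun x : ℝ => x) ν) (hmean : ∫ x, x ∂μ = ∫ x, x ∂ν)
    (hcross : ∀ s s', s ≤ s' → cdf ν s < cdf μ s → cdf ν s' ≤ cdf μ s') (t : ℝ) :
    ∫ s in Iic t, cdf μ s ≤ ∫ s in Iic t, cdf ν s := by
  by_cases hle : ∀ s ≤ t, cdf μ s ≤ cdf ν s
  · exact integral_Iic_cdf_le_of_cdf_le hμ hν hle
  · push Not at hle
    obtain ⟨s, hst, hlt⟩ := hle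
    exact integral_Iic_cdf_le_of_cdf_ge hμ hν hmean fun s' hs' => hcross s s' (hst.trans hs') hlt

end SecondOrder

section PsiB

variable {Ω : Type*} {ψL ψU : Ω → ℝ}

lemma measurable_psiB [MeasurableSpace Ω] (hL : Measurable ψL) (hU : Measurable ψU) (b : ℝ) :
    Measurable (psiB ψL ψU b) :=
  Measurable.ite (measurableSet_lt hU measurable_const) hU (measurable_const.max hL)

lemma psiB_mem_Icc (hle : ∀ ω, ψL ω ≤ ψU ω) (b : ℝ) (ω : Ω) :
    psiB ψL ψU b ω ∈ Icc (ψL ω) (ψU ω) := by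
  unfold psiB
  split_ifs with h
  · exact ⟨hle ω, le_rfl⟩
  · exact ⟨le_max_right _ _, max_le (not_lt.1 h) (hle ω)⟩

lemma psiB_le_iff_of_lt {b s : ℝ} (hs : s < b) (ω : Ω) : psiB ψL ψU b ω ≤ s ↔ ψU ω ≤ s := by
  unfold psiB
  split_ifs with h
  · rfl
  · constructor <;> intro h' <;> linarith [le_max_left b (ψL ω), not_lt.1 h]

lemma psiB_le_iff_of_le (hle : ∀ ω, ψL ω ≤ ψU ω) {b s : ℝ} (hs : b ≤ s) (ω : Ω) :
    psiB ψL ψU b ω ≤ s ↔ ψL ω ≤ s := by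
  unfold psiB
  split_ifs with h
  · constructor <;> intro h' <;> linarith [hle ω]
  · simp [hs]

variable [MeasurableSpace Ω] (P : Measure Ω)

lemma exists_eq_map_of_mem_FB (hL : Measurable ψL) (hU : Measurable ψU) (hLi : Integrable ψL P)
    (hUi : Integrable ψU P) (hle : ∀ ω, ψL ω ≤ ψU ω) {μ : Measure ℝ} (hμ : μ ∈ FB P ψL ψU) :
    ∃ f : Ω → ℝ, Measurable f ∧ Integrable f P ∧ μ = P.map f := by
  rcases hμ with ⟨b, rfl⟩ | rfl | rfl
  · refine ⟨_, measurable_psiB hL hU b, ?_, rfl⟩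
    exact integrable_of_le_of_le (measurable_psiB hL hU b).aestronglyMeasurable
      (ae_of_all _ fun ω => (psiB_mem_Icc hle b ω).1)
      (ae_of_all _ fun ω => (psiB_mem_Icc hle b ω).2) hLi hUi
  · exact ⟨ψL, hL, hLi, rfl⟩
  · exact ⟨ψU, hU, hUi, rfl⟩

variable [IsProbabilityMeasure P]

lemma cdf_map_congr {f g : Ω → ℝ} (hf : Measurable f) (hg : Measurable g) {s : ℝ}
    (h : ∀ ω, f ω ≤ s ↔ g ω ≤ s) : cdf (P.map f) s = cdf (P.map g) s := by
  have := Measure.isProbabilityMeasure_map (μ := P) hf.aemeasurable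
  have := Measure.isProbabilityMeasure_map (μ := P) hg.aemeasurable
  rw [cdf_eq_real, cdf_eq_real, map_measureReal_apply hf measurableSet_Iic,
    map_measureReal_apply hg measurableSet_Iic]
  congr 1
  ext ω
  exact h ω

lemma exists_isUpperSet_cdf_eq_of_mem_FB (hL : Measurable ψL) (hU : Measurable ψU)
    (hle : ∀ ω, ψL ω ≤ ψU ω) {μ : Measure ℝ} (hμ : μ ∈ FB P ψL ψU) :
    ∃ S : Set ℝ, IsUpperSet S ∧ (∀ s ∈ S, cdf μ s = cdf (P.map ψL) s) ∧
      ∀ s ∉ S, cdf μ s = cdf (P.map ψU) s := by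
  rcases hμ with ⟨b, rfl⟩ | rfl | rfl
  · exact ⟨Ici b, isUpperSet_Ici b,
      fun s hs => cdf_map_congr P (measurable_psiB hL hU b) hL (psiB_le_iff_of_le hle hs),
      fun s hs => cdf_map_congr P (measurable_psiB hL hU b) hU
        (psiB_le_iff_of_lt (not_le.1 hs))⟩
  · exact ⟨univ, isUpperSet_univ, fun _ _ => rfl, fun _ hs => absurd (mem_univ _) hs⟩
  · exact ⟨∅, isUpperSet_empty, fun _ hs => absurd hs (notMem_empty _), fun _ _ => rfl⟩

end PsiB

theorem Fstar_dominates_secondOrder_general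
    {Ω Ω' : Type*} [MeasurableSpace Ω] [MeasurableSpace Ω']
    (P : Measure Ω) (P' : Measure Ω')
    [IsProbabilityMeasure P]
    {ψL ψU : Ω → ℝ} {Y : Ω' → ℝ}
    (hψLm : Measurable ψL) (hψUm : Measurable ψU)
    (hψLi : Integrable ψL P) (hψUi : Integrable ψU P)
    (hle : ∀ ω, ψL ω ≤ ψU ω)
    (μstar : Measure ℝ) (hμstar : μstar ∈ FB P ψL ψU)
    (hμstarMean : ∫ x : ℝ, x ∂μstar = ∫ ω, Y ω ∂P') :
    ∀ ν : Measure ℝ, IsProbabilityMeasure ν → Integrable (fun x : ℝ => x) ν →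
      (∀ t : ℝ, cdf (P.map ψU) t ≤ cdf ν t ∧ cdf ν t ≤ cdf (P.map ψL) t) →
      (∫ x : ℝ, x ∂ν = ∫ ω, Y ω ∂P') →
      ∀ t : ℝ, ∫ s in Set.Iic t, cdf μstar s ≤ ∫ s in Set.Iic t, cdf ν s := by
  intro ν hν hνi hsand hνmean t
  obtain ⟨S, hS, hSL, hSU⟩ := exists_isUpperSet_cdf_eq_of_mem_FB P hψLm hψUm hle hμstar
  obtain ⟨f, hf, hfi, rfl⟩ := exists_eq_map_of_mem_FB P hψLm hψUm hψLi hψUi hle hμstar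
  have := Measure.isProbabilityMeasure_map (μ := P) hf.aemeasurable
  have hμi : Integrable (fun x : ℝ => x) (P.map f) :=
    (integrable_map_measure aestronglyMeasurable_id hf.aemeasurable).2 hfi
  refine integral_Iic_cdf_le_of_single_crossing hμi hνi (hμstarMean.trans hνmean.symm)
    (fun s s' hss' hlt => ?_) t
  have hs : s ∈ S := by
    by_contra hs
    linarith [hSU s hs, (hsand s).1]
  rw [hSL s' (hS hss' hs)]
  exact (hsand s').2

/-- The key step in the proof of Proposition 8: `F*`, the unique element of `𝓕_B` with mean
`E[Y]`, dominates at the second order every integrable distribution `F` with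
`F_{ψ_U} ≤ F ≤ F_{ψ_L}` pointwise and mean `E[Y]`. -/
theorem Fstar_dominates_secondOrder
    {Ω Ω' : Type*} [MeasurableSpace Ω] [MeasurableSpace Ω']
    (P : Measure Ω) (P' : Measure Ω')
    [IsProbabilityMeasure P] [IsProbabilityMeasure P']
    {ψL ψU : Ω → ℝ} {Y : Ω' → ℝ}
    (hψLm : Measurable ψL) (hψUm : Measurable ψU)
    (hψLi : Integrable ψL P) (hψUi : Integrable ψU P)
    (hle : ∀ ω, ψL ω ≤ ψU ω)
    (hYm : Measurable Y) (hYi : Integrable Y P')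
    (hlow : ∫ ω, ψL ω ∂P ≤ ∫ ω, Y ω ∂P')
    (hup : ∫ ω, Y ω ∂P' ≤ ∫ ω, ψU ω ∂P)
    (μstar : Measure ℝ) (hμstar : μstar ∈ FB P ψL ψU)
    (hμstarMean : ∫ x : ℝ, x ∂μstar = ∫ ω, Y ω ∂P') :
    ∀ ν : Measure ℝ, IsProbabilityMeasure ν → Integrable (fun x : ℝ => x) ν →
      (∀ t : ℝ, cdf (P.map ψU) t ≤ cdf ν t ∧ cdf ν t ≤ cdf (P.map ψL) t) →
      (∫ x : ℝ, x ∂ν = ∫ ω, Y ω ∂P') →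
      ∀ t : ℝ, ∫ s in Set.Iic t, cdf μstar s ≤ ∫ s in Set.Iic t, cdf ν s :=
  Fstar_dominates_secondOrder_general P P' hψLm hψUm hψLi hψUi hle μstar hμstar hμstarMean
end

section
/- Let (Y, ψ, X, D) be random variables on a common probability space, with Y and ψ integrable real random variables, X a random vector in ℝ^{d_X}, and D taking values in {0, 1}. Assume D is conditionally independent of (Y, ψ) given X, and let p(X) be a version of E[D | X] with 0 < p(X) < 1 almost surely. Define W = D/p(X) − (1 − D)/(1 − p(X)) and Ỹ = DY + (1 − D)ψ. Then, almost surely, E[W(y − Ỹ)⁺ | X] = E[(y − Y)⁺ | X] − E[(y − ψ)⁺ | X] for all y ∈ ℝ and E[WỸ | X] = E[Y − ψ | X]. Consequently, the conditional moment conditions 'almost surely, E[(y − Y)⁺ | X] ≥ E[(y − ψ)⁺ | X] for all y ∈ ℝ and E[Y | X] = E[ψ | X]' hold if and only if 'almost surely, E[W(y − Ỹ)⁺ | X] ≥ 0 for all y ∈ ℝ and E[WỸ | X] = 0'. -/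
/-! Conditional independence of `D` and `(Y, ψ)` given `X`, stated for indicators, says that
for every `X`-measurable `S` the finite measures `B ↦ E[D 1_B(Y, ψ); S]` and
`B ↦ E[p(X) 1_B(Y, ψ); S]` agree. Integrating against them gives
`E[D g(Y, ψ) | X] = p(X) E[g(Y, ψ) | X]` for every integrable `g(Y, ψ)`, and likewise with `1 - D`
and `1 - p(X)`. Since `D ∈ {0, 1}`, `W f(Ỹ) = D f(Y) / p(X) - (1 - D) f(ψ) / (1 - p(X))`, and
pulling the `X`-measurable weights out of the conditional expectation yields
`E[W f(Ỹ) | X] = E[f(Y) | X] - E[f(ψ) | X]`; take `f = (y - ·)⁺` and `f = id`. -/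

open MeasureTheory ProbabilityTheory

/-- The weighting variable `W = D/p(X) - (1 - D)/(1 - p(X))`, with `pX = p ∘ X`. -/
noncomputable def Wfun {Ω : Type*} (D pX : Ω → ℝ) (ω : Ω) : ℝ :=
  D ω / pX ω - (1 - D ω) / (1 - pX ω)

/-- `Ỹ = D Y + (1 - D) ψ`. -/
def Ytilde {Ω : Type*} (D Y ψ : Ω → ℝ) (ω : Ω) : ℝ := D ω * Y ω + (1 - D ω) * ψ ω

section
variable {Ω β : Type*} {mΩ : MeasurableSpace Ω} [MeasurableSpace β] {μ : Measure Ω}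
  {c : Ω → ℝ} {Z : Ω → β}

theorem map_withDensity_ofReal_apply (hc : Integrable c μ) (hc0 : 0 ≤ᵐ[μ] c)
    (hZ : Measurable Z) {B : Set β} (hB : MeasurableSet B) :
    (μ.withDensity fun ω => ENNReal.ofReal (c ω)).map Z B
      = ENNReal.ofReal (∫ ω in Z ⁻¹' B, c ω ∂μ) := by
  rw [Measure.map_apply hZ hB, withDensity_apply _ (hZ hB),
    ofReal_integral_eq_lintegral_ofReal hc.integrableOn (ae_restrict_of_ae hc0)]

theorem integral_map_withDensity_ofReal (hc : Integrable c μ) (hc0 : 0 ≤ᵐ[μ] c)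
    (hZ : Measurable Z) {g : β → ℝ} (hg : Measurable g) :
    ∫ v, g v ∂(μ.withDensity fun ω => ENNReal.ofReal (c ω)).map Z
      = ∫ ω, c ω * g (Z ω) ∂μ := by
  rw [integral_map hZ.aemeasurable hg.aestronglyMeasurable,
    integral_withDensity_eq_integral_toReal_smul₀ hc.1.aemeasurable.ennreal_ofReal
      (ae_of_all _ fun _ => ENNReal.ofReal_lt_top)]
  refine integral_congr_ae ?_
  filter_upwards [hc0] with ω hω
  simp [ENNReal.toReal_ofReal hω]

theorem integral_mul_comp_eq_of_forall_setIntegral_preimage_eq {c₁ c₂ : Ω → ℝ}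
    (hc₁ : Integrable c₁ μ) (hc₂ : Integrable c₂ μ) (hc₁0 : 0 ≤ᵐ[μ] c₁) (hc₂0 : 0 ≤ᵐ[μ] c₂)
    (hZ : Measurable Z)
    (h : ∀ B, MeasurableSet B → ∫ ω in Z ⁻¹' B, c₁ ω ∂μ = ∫ ω in Z ⁻¹' B, c₂ ω ∂μ)
    {g : β → ℝ} (hg : Measurable g) :
    ∫ ω, c₁ ω * g (Z ω) ∂μ = ∫ ω, c₂ ω * g (Z ω) ∂μ := by
  have hlaw : (μ.withDensity fun ω => ENNReal.ofReal (c₁ ω)).map Z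
      = (μ.withDensity fun ω => ENNReal.ofReal (c₂ ω)).map Z := by
    ext B hB
    rw [map_withDensity_ofReal_apply hc₁ hc₁0 hZ hB, map_withDensity_ofReal_apply hc₂ hc₂0 hZ hB,
      h B hB]
  rw [← integral_map_withDensity_ofReal hc₁ hc₁0 hZ hg, hlaw,
    integral_map_withDensity_ofReal hc₂ hc₂0 hZ hg]

theorem setIntegral_mul_indicator_comp (f : Ω → ℝ) (hZ : Measurable Z) {B : Set β}
    (hB : MeasurableSet B) (S : Set Ω) :
    ∫ ω in S, f ω * B.indicator (fun _ => (1 : ℝ)) (Z ω) ∂μ = ∫ ω in Z ⁻¹' B, f ω ∂μ.restrict S := by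
  rw [← integral_indicator (hZ hB)]
  congr 1 with ω
  by_cases h : Z ω ∈ B <;> simp [h]

end

section
variable {Ω β : Type*} {m mΩ : MeasurableSpace Ω} [MeasurableSpace β] {μ : Measure Ω}
  [IsFiniteMeasure μ] {I : Ω → ℝ} {Z : Ω → β}

theorem condExp_mul_comp_eq_of_forall_indicator (hm : m ≤ mΩ) (hI : AEStronglyMeasurable I μ)
    (hI0 : 0 ≤ᵐ[μ] I) {R : ℝ} (hIR : ∀ᵐ ω ∂μ, |I ω| ≤ R) (hZ : Measurable Z)
    (hCI : ∀ B, MeasurableSet B →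
      μ[fun ω => I ω * B.indicator (fun _ => (1 : ℝ)) (Z ω) | m]
        =ᵐ[μ] fun ω => (μ[I | m]) ω * (μ[fun ω' => B.indicator (fun _ => (1 : ℝ)) (Z ω') | m]) ω)
    {g : β → ℝ} (hg : Measurable g) (hgi : Integrable (fun ω => g (Z ω)) μ) :
    μ[fun ω => I ω * g (Z ω) | m] =ᵐ[μ] fun ω => (μ[I | m]) ω * (μ[fun ω' => g (Z ω') | m]) ω := by
  set c := μ[I | m]
  have hIi : Integrable I μ := .of_bound hI R hIR
  have hcR : ∀ᵐ ω ∂μ, ‖c ω‖ ≤ R := ae_bdd_abs_condExp_of_ae_bdd_abs hIR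
  have hcm : StronglyMeasurable[m] c := stronglyMeasurable_condExp
  have hcomp : ∀ {h : β → ℝ}, Integrable (fun ω => h (Z ω)) μ →
      μ[fun ω => c ω * h (Z ω) | m] =ᵐ[μ] fun ω => c ω * (μ[fun ω' => h (Z ω') | m]) ω :=
    fun hh => condExp_stronglyMeasurable_mul_of_bound hm hcm hh R hcR
  have hset : ∀ S, MeasurableSet[m] S →
      ∫ ω in S, I ω * g (Z ω) ∂μ = ∫ ω in S, c ω * g (Z ω) ∂μ := by
    intro S hS
    refine integral_mul_comp_eq_of_forall_setIntegral_preimage_eq hIi.restrict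
      integrable_condExp.restrict (ae_restrict_of_ae hI0)
      (ae_restrict_of_ae (condExp_nonneg hI0)) hZ (fun B hB => ?_) hg
    have h1B : Integrable (fun ω => B.indicator (fun _ => (1 : ℝ)) (Z ω)) μ :=
      ((integrable_const 1).indicator hB).comp_measurable hZ
    have hIB : Integrable (fun ω => I ω * B.indicator (fun _ => (1 : ℝ)) (Z ω)) μ :=
      h1B.bdd_mul hI (hIR.mono fun ω h => by rwa [Real.norm_eq_abs])
    have hcB : Integrable (fun ω => c ω * B.indicator (fun _ => (1 : ℝ)) (Z ω)) μ :=
      h1B.bdd_mul integrable_condExp.1 hcR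
    rw [← setIntegral_mul_indicator_comp _ hZ hB, ← setIntegral_mul_indicator_comp _ hZ hB,
      ← setIntegral_condExp hm hIB hS, ← setIntegral_condExp hm hcB hS]
    exact setIntegral_congr_ae (hm S hS) <| ((hCI B hB).trans (hcomp h1B).symm).mono fun _ h _ => h
  have hIg : Integrable (fun ω => I ω * g (Z ω)) μ :=
    hgi.bdd_mul hI (hIR.mono fun ω h => by rwa [Real.norm_eq_abs])
  have hcg : Integrable (fun ω => c ω * g (Z ω)) μ := hgi.bdd_mul integrable_condExp.1 hcR
  refine (ae_eq_condExp_of_forall_setIntegral_eq hm hIg (fun _ _ _ => integrable_condExp.integrableOn)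
    (fun S hS _ => ?_) stronglyMeasurable_condExp.aestronglyMeasurable).symm.trans (hcomp hgi)
  rw [setIntegral_condExp hm hcg hS, hset S hS]

end

section
variable {Ω : Type*} {D Y ψ q : Ω → ℝ} {ω : Ω}

theorem comp_Ytilde (hD : D ω = 0 ∨ D ω = 1) (f : ℝ → ℝ) :
    f (Ytilde D Y ψ ω) = Ytilde D (fun ω => f (Y ω)) (fun ω => f (ψ ω)) ω := by
  rcases hD with h | h <;> simp [Ytilde, h]

theorem mul_Wfun_mul_Ytilde (hD : D ω = 0 ∨ D ω = 1) :
    D ω * (Wfun D q ω * Ytilde D Y ψ ω) = (q ω)⁻¹ * (D ω * Y ω) := by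
  rcases hD with h | h <;> simp [Wfun, Ytilde, h]

theorem sub_one_mul_Wfun_mul_Ytilde (hD : D ω = 0 ∨ D ω = 1) :
    (D ω - 1) * (Wfun D q ω * Ytilde D Y ψ ω) = (1 - q ω)⁻¹ * ((1 - D ω) * ψ ω) := by
  rcases hD with h | h <;> simp [Wfun, Ytilde, h]

theorem Wfun_mul_Ytilde (hD : D ω = 0 ∨ D ω = 1) :
    Wfun D q ω * Ytilde D Y ψ ω
      = (q ω)⁻¹ * (D ω * Y ω) - (1 - q ω)⁻¹ * ((1 - D ω) * ψ ω) := by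
  rcases hD with h | h <;> simp [Wfun, Ytilde, h]

end

section
variable {Ω : Type*} {m mΩ : MeasurableSpace Ω} {μ : Measure Ω}

theorem condExp_Wfun_mul_Ytilde {D q U V : Ω → ℝ} (hD : AEStronglyMeasurable D μ)
    (hD01 : ∀ ω, D ω = 0 ∨ D ω = 1) (hq : StronglyMeasurable[m] q)
    (hq01 : ∀ᵐ ω ∂μ, 0 < q ω ∧ q ω < 1) (hUi : Integrable U μ) (hVi : Integrable V μ)
    (hU : μ[fun ω => D ω * U ω | m] =ᵐ[μ] fun ω => q ω * (μ[U | m]) ω)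
    (hV : μ[fun ω => (1 - D ω) * V ω | m] =ᵐ[μ] fun ω => (1 - q ω) * (μ[V | m]) ω)
    (hW : Integrable (fun ω => Wfun D q ω * Ytilde D U V ω) μ) :
    μ[fun ω => Wfun D q ω * Ytilde D U V ω | m] =ᵐ[μ] fun ω => (μ[U | m]) ω - (μ[V | m]) ω := by
  have hDle : ∀ᵐ ω ∂μ, ‖D ω‖ ≤ 1 :=
    ae_of_all _ fun ω => by rcases hD01 ω with h | h <;> simp [h]
  have hD1le : ∀ᵐ ω ∂μ, ‖D ω - 1‖ ≤ 1 :=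
    ae_of_all _ fun ω => by rcases hD01 ω with h | h <;> simp [h]
  have h1Dle : ∀ᵐ ω ∂μ, ‖1 - D ω‖ ≤ 1 := hD1le.mono fun ω h => by rwa [norm_sub_rev]
  have hA : Integrable (fun ω => (q ω)⁻¹ * (D ω * U ω)) μ :=
    (hW.bdd_mul hD hDle).congr (ae_of_all _ fun ω => mul_Wfun_mul_Ytilde (hD01 ω))
  have hB : Integrable (fun ω => (1 - q ω)⁻¹ * ((1 - D ω) * V ω)) μ :=
    (hW.bdd_mul (hD.sub aestronglyMeasurable_const) hD1le).congr
      (ae_of_all _ fun ω => sub_one_mul_Wfun_mul_Ytilde (hD01 ω))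
  have eA : μ[fun ω => (q ω)⁻¹ * (D ω * U ω) | m] =ᵐ[μ] μ[U | m] := by
    refine (condExp_mul_of_stronglyMeasurable_left hq.measurable.inv.stronglyMeasurable hA
      (hUi.bdd_mul hD hDle)).trans ?_
    filter_upwards [hU, hq01] with ω hω hqω
    rw [Pi.mul_apply, hω]
    exact inv_mul_cancel_left₀ hqω.1.ne' _
  have eB : μ[fun ω => (1 - q ω)⁻¹ * ((1 - D ω) * V ω) | m] =ᵐ[μ] μ[V | m] := by
    refine (condExp_mul_of_stronglyMeasurable_left
      (measurable_const.sub hq.measurable).inv.stronglyMeasurable hB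
      (hVi.bdd_mul (aestronglyMeasurable_const.sub hD) h1Dle)).trans ?_
    filter_upwards [hV, hq01] with ω hω hqω
    rw [Pi.mul_apply, hω]
    exact inv_mul_cancel_left₀ (sub_pos.2 hqω.2).ne' _
  have hsplit : (fun ω => Wfun D q ω * Ytilde D U V ω)
      = fun ω => (q ω)⁻¹ * (D ω * U ω) - (1 - q ω)⁻¹ * ((1 - D ω) * V ω) :=
    funext fun ω => Wfun_mul_Ytilde (hD01 ω)
  rw [hsplit]
  exact (condExp_sub hA hB m).trans (eA.sub eB)

theorem condExp_Wfun_mul_comp_Ytilde [IsFiniteMeasure μ] (hm : m ≤ mΩ) {Y ψ D q : Ω → ℝ}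
    (hYm : Measurable Y) (hψm : Measurable ψ) (hDm : Measurable D)
    (hD01 : ∀ ω, D ω = 0 ∨ D ω = 1) (hq : StronglyMeasurable[m] q) (hqD : q =ᵐ[μ] μ[D | m])
    (hq01 : ∀ᵐ ω ∂μ, 0 < q ω ∧ q ω < 1)
    (hCI : ∀ (A : Set ℝ) (B : Set (ℝ × ℝ)), MeasurableSet A → MeasurableSet B →
      μ[fun ω => Set.indicator A (fun _ => (1 : ℝ)) (D ω) *
            Set.indicator B (fun _ => (1 : ℝ)) (Y ω, ψ ω) | m]
        =ᵐ[μ] fun ω =>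
          (μ[fun ω' => Set.indicator A (fun _ => (1 : ℝ)) (D ω') | m]) ω *
          (μ[fun ω' => Set.indicator B (fun _ => (1 : ℝ)) (Y ω', ψ ω') | m]) ω)
    {f : ℝ → ℝ} (hf : Measurable f) (hfY : Integrable (fun ω => f (Y ω)) μ)
    (hfψ : Integrable (fun ω => f (ψ ω)) μ)
    (hfW : Integrable (fun ω => Wfun D q ω * f (Ytilde D Y ψ ω)) μ) :
    μ[fun ω => Wfun D q ω * f (Ytilde D Y ψ ω) | m]
      =ᵐ[μ] fun ω => (μ[fun ω' => f (Y ω') | m]) ω - (μ[fun ω' => f (ψ ω') | m]) ω := by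
  have hcomp : (fun ω => Wfun D q ω * f (Ytilde D Y ψ ω))
      = fun ω => Wfun D q ω * Ytilde D (fun ω => f (Y ω)) (fun ω => f (ψ ω)) ω :=
    funext fun ω => by rw [comp_Ytilde (hD01 ω) f]
  rw [hcomp] at hfW ⊢
  have hZ : Measurable fun ω => (Y ω, ψ ω) := hYm.prodMk hψm
  have hD0 : 0 ≤ᵐ[μ] D := ae_of_all _ fun ω => by rcases hD01 ω with h | h <;> simp [h]
  have hDle : ∀ᵐ ω ∂μ, |D ω| ≤ 1 := ae_of_all _ fun ω => by rcases hD01 ω with h | h <;> simp [h]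
  have h1D0 : 0 ≤ᵐ[μ] fun ω => 1 - D ω :=
    ae_of_all _ fun ω => by rcases hD01 ω with h | h <;> simp [h]
  have h1Dle : ∀ᵐ ω ∂μ, |1 - D ω| ≤ 1 :=
    ae_of_all _ fun ω => by rcases hD01 ω with h | h <;> simp [h]
  have hCI1 := fun B hB => hCI {1} B (measurableSet_singleton 1) hB
  have hCI0 := fun B hB => hCI {0} B (measurableSet_singleton 0) hB
  have hind1 : ∀ ω, Set.indicator {1} (fun _ => (1 : ℝ)) (D ω) = D ω := fun ω => by
    rcases hD01 ω with h | h <;> simp [h]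
  have hind0 : ∀ ω, Set.indicator {0} (fun _ => (1 : ℝ)) (D ω) = 1 - D ω := fun ω => by
    rcases hD01 ω with h | h <;> simp [h]
  simp only [hind1] at hCI1
  simp only [hind0] at hCI0
  have h1D : μ[fun ω => 1 - D ω | m] =ᵐ[μ] fun ω => 1 - q ω := by
    have hsub := condExp_sub (integrable_const (1 : ℝ)) (.of_bound hDm.aestronglyMeasurable 1 hDle) m
    rw [condExp_const hm] at hsub
    filter_upwards [hsub, hqD] with ω h hqω
    rw [hqω]
    exact h
  refine condExp_Wfun_mul_Ytilde hDm.aestronglyMeasurable hD01 hq hq01 hfY hfψ ?_ ?_ hfW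
  · filter_upwards [condExp_mul_comp_eq_of_forall_indicator hm hDm.aestronglyMeasurable hD0 hDle hZ
      hCI1 (g := fun v => f v.1) (hf.comp measurable_fst) hfY, hqD] with ω h hqω
    rw [h, hqω]
  · filter_upwards [condExp_mul_comp_eq_of_forall_indicator (I := fun ω => 1 - D ω) hm
      (aestronglyMeasurable_const.sub hDm.aestronglyMeasurable) h1D0 h1Dle hZ
      hCI0 (g := fun v => f v.2) (hf.comp measurable_snd) hfψ, h1D] with ω h hqω
    rw [h, hqω]

end

section
variable {Ω : Type*} {mΩ : MeasurableSpace Ω} {μ : Measure Ω} {f g h : Ω → ℝ}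

theorem ae_le_iff_ae_nonneg_of_ae_eq_sub (hh : h =ᵐ[μ] fun ω => f ω - g ω) :
    g ≤ᵐ[μ] f ↔ (fun _ => 0) ≤ᵐ[μ] h :=
  ⟨fun H => by filter_upwards [H, hh] with ω hω e using e ▸ sub_nonneg.2 hω,
    fun H => by filter_upwards [H, hh] with ω hω e using sub_nonneg.1 (e ▸ hω)⟩

theorem ae_eq_iff_ae_eq_zero_of_ae_eq_sub (hh : h =ᵐ[μ] fun ω => f ω - g ω) :
    f =ᵐ[μ] g ↔ h =ᵐ[μ] fun _ => 0 :=
  ⟨fun H => by filter_upwards [H, hh] with ω hω e using e ▸ sub_eq_zero.2 hω,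
    fun H => by filter_upwards [H, hh] with ω hω e using sub_eq_zero.1 (e ▸ hω)⟩

end

/-- Proposition 9 of the paper (sample selection / propensity-score reweighting): if `D` is
conditionally independent of `(Y, ψ)` given `X`, with propensity score `p(X) ∈ (0,1)` a.s.,
then a.s. `E[W(y - Ỹ)⁺ | X] = E[(y - Y)⁺ | X] - E[(y - ψ)⁺ | X]` for all `y` and
`E[WỸ | X] = E[Y - ψ | X]`; consequently H₀X's conditional moment conditions hold iff the
reweighted conditional moment conditions hold. -/
theorem propensity_reweighting
    {Ω : Type*} [MeasurableSpace Ω] (P : Measure Ω) [IsProbabilityMeasure P]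
    {d : ℕ} {Y ψ : Ω → ℝ} {X : Ω → Fin d → ℝ} {D : Ω → ℝ}
    (hYm : Measurable Y) (hψm : Measurable ψ) (hXm : Measurable X) (hDm : Measurable D)
    (hYi : Integrable Y P) (hψi : Integrable ψ P)
    (hD01 : ∀ ω, D ω = 0 ∨ D ω = 1)
    (p : (Fin d → ℝ) → ℝ) (hpm : Measurable p)
    (hp : (fun ω => p (X ω)) =ᵐ[P] P[D | MeasurableSpace.comap X inferInstance])
    (hp01 : ∀ᵐ ω ∂P, 0 < p (X ω) ∧ p (X ω) < 1)
    -- conditional independence of `D` and `(Y, ψ)` given `X`: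
    (hCI : ∀ (A : Set ℝ) (B : Set (ℝ × ℝ)), MeasurableSet A → MeasurableSet B →
      P[fun ω => Set.indicator A (fun _ => (1 : ℝ)) (D ω) *
            Set.indicator B (fun _ => (1 : ℝ)) (Y ω, ψ ω) |
          MeasurableSpace.comap X inferInstance]
        =ᵐ[P] fun ω =>
          (P[fun ω' => Set.indicator A (fun _ => (1 : ℝ)) (D ω') |
              MeasurableSpace.comap X inferInstance]) ω *
          (P[fun ω' => Set.indicator B (fun _ => (1 : ℝ)) (Y ω', ψ ω') |
              MeasurableSpace.comap X inferInstance]) ω)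
    -- integrability of the reweighted moments:
    (hWYpos : ∀ y : ℝ, Integrable
      (fun ω => Wfun D (fun ω' => p (X ω')) ω * max (y - Ytilde D Y ψ ω) 0) P)
    (hWYt : Integrable (fun ω => Wfun D (fun ω' => p (X ω')) ω * Ytilde D Y ψ ω) P) :
    (∀ y : ℝ,
      P[fun ω => Wfun D (fun ω' => p (X ω')) ω * max (y - Ytilde D Y ψ ω) 0 |
          MeasurableSpace.comap X inferInstance]
        =ᵐ[P] fun ω =>
          (P[fun ω' => max (y - Y ω') 0 | MeasurableSpace.comap X inferInstance]) ω -
          (P[fun ω' => max (y - ψ ω') 0 | MeasurableSpace.comap X inferInstance]) ω) ∧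
    (P[fun ω => Wfun D (fun ω' => p (X ω')) ω * Ytilde D Y ψ ω |
        MeasurableSpace.comap X inferInstance]
      =ᵐ[P] fun ω =>
        (P[Y | MeasurableSpace.comap X inferInstance]) ω -
        (P[ψ | MeasurableSpace.comap X inferInstance]) ω) ∧
    (((∀ y : ℝ,
        P[fun ω => max (y - ψ ω) 0 | MeasurableSpace.comap X inferInstance]
          ≤ᵐ[P] P[fun ω => max (y - Y ω) 0 | MeasurableSpace.comap X inferInstance]) ∧
      P[Y | MeasurableSpace.comap X inferInstance]
        =ᵐ[P] P[ψ | MeasurableSpace.comap X inferInstance]) ↔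
     ((∀ y : ℝ,
        (fun _ => (0 : ℝ)) ≤ᵐ[P]
          P[fun ω => Wfun D (fun ω' => p (X ω')) ω * max (y - Ytilde D Y ψ ω) 0 |
            MeasurableSpace.comap X inferInstance]) ∧
      P[fun ω => Wfun D (fun ω' => p (X ω')) ω * Ytilde D Y ψ ω |
          MeasurableSpace.comap X inferInstance]
        =ᵐ[P] fun _ => (0 : ℝ))) := by
  have hm : MeasurableSpace.comap X inferInstance ≤ _ := hXm.comap_le
  have hq : StronglyMeasurable[MeasurableSpace.comap X inferInstance] fun ω => p (X ω) :=
    (hpm.comp (comap_measurable X)).stronglyMeasurable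
  have reweight := fun {f : ℝ → ℝ} (hf : Measurable f) =>
    condExp_Wfun_mul_comp_Ytilde hm hYm hψm hDm hD01 hq hp hp01 hCI hf
  have hpos : ∀ y : ℝ, _ := fun y =>
    reweight (f := fun t => max (y - t) 0) (by fun_prop) ((integrable_const y).sub hYi).pos_part
      ((integrable_const y).sub hψi).pos_part (hWYpos y)
  have hmean := reweight (f := fun t => t) measurable_id hYi hψi hWYt
  exact ⟨hpos, hmean, and_congr (forall_congr' fun y => ae_le_iff_ae_nonneg_of_ae_eq_sub (hpos y))
    (ae_eq_iff_ae_eq_zero_of_ae_eq_sub hmean)⟩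
end

section
/- Let Y be a random variable taking values in {0, 1} almost surely and ψ a random variable taking values in [0, 1] almost surely, with E[Y] = E[ψ]. Then for every y ∈ ℝ, E[(y − Y)⁺] ≥ E[(y − ψ)⁺]. In particular, when the outcome is binary, the moment equality E[Y] = E[ψ] alone implies all the moment inequalities characterizing H₀. -/
open MeasureTheory ProbabilityTheory

/-!
On `[0, 1]` the convex function `t ↦ (y - t)⁺` lies below its chord through `t = 0` and `t = 1`,
and agrees with it at the endpoints. The chord is affine, so its expectation depends only on the
mean. Hence `E[(y - ψ)⁺] ≤ chord(E[ψ]) = chord(E[Y]) = E[(y - Y)⁺]`.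
-/

def posPartChord (y t : ℝ) : ℝ := (1 - t) * max y 0 + t * max (y - 1) 0

lemma posPartChord_eq_posPart_sub {y t : ℝ} (ht : t = 0 ∨ t = 1) :
    posPartChord y t = max (y - t) 0 := by
  rcases ht with rfl | rfl <;> simp [posPartChord]

lemma posPart_sub_le_posPartChord {y t : ℝ} (h₀ : 0 ≤ t) (h₁ : t ≤ 1) :
    max (y - t) 0 ≤ posPartChord y t := by
  have h₁' : 0 ≤ 1 - t := sub_nonneg.mpr h₁
  refine max_le ?_ (by unfold posPartChord; positivity)
  calc y - t = (1 - t) * y + t * (y - 1) := by ring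
    _ ≤ posPartChord y t := by
      unfold posPartChord
      gcongr <;> exact le_max_left _ _

section Expectation

variable {Ω : Type*} [MeasurableSpace Ω] {P : Measure Ω} [IsProbabilityMeasure P] {X : Ω → ℝ}

lemma integrable_of_ae_mem_Icc (hX : AEStronglyMeasurable X P)
    (h01 : ∀ᵐ ω ∂P, X ω ∈ Set.Icc (0 : ℝ) 1) : Integrable X P :=
  .of_bound hX 1 <| h01.mono fun _ hω => by
    rw [Real.norm_eq_abs, abs_le]
    exact ⟨by linarith [hω.1], hω.2⟩

lemma integral_posPartChord (y : ℝ) (hX : Integrable X P) :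
    ∫ ω, posPartChord y (X ω) ∂P = posPartChord y (∫ ω, X ω ∂P) := by
  have affine (t : ℝ) : posPartChord y t = max y 0 + t * (max (y - 1) 0 - max y 0) := by
    unfold posPartChord; ring
  simp only [affine]
  rw [integral_add (integrable_const _) (hX.mul_const _), integral_mul_const, integral_const,
    probReal_univ, one_smul]

lemma integral_posPart_sub_le_posPartChord (y : ℝ) (hX : AEStronglyMeasurable X P)
    (h01 : ∀ᵐ ω ∂P, X ω ∈ Set.Icc (0 : ℝ) 1) :
    ∫ ω, max (y - X ω) 0 ∂P ≤ posPartChord y (∫ ω, X ω ∂P) := by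
  have hXi := integrable_of_ae_mem_Icc hX h01
  rw [← integral_posPartChord y hXi]
  refine integral_mono_ae ((integrable_const y).sub hXi).pos_part ?_ ?_
  · unfold posPartChord
    fun_prop
  · exact h01.mono fun _ hω => posPart_sub_le_posPartChord hω.1 hω.2

lemma integral_posPart_sub_eq_posPartChord (y : ℝ) (hX : AEStronglyMeasurable X P)
    (h01 : ∀ᵐ ω ∂P, X ω = 0 ∨ X ω = 1) :
    ∫ ω, max (y - X ω) 0 ∂P = posPartChord y (∫ ω, X ω ∂P) := by
  have hXi : Integrable X P := integrable_of_ae_mem_Icc hX <| h01.mono fun _ hω => by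
    rcases hω with h | h <;> simp [h]
  rw [← integral_posPartChord y hXi]
  exact integral_congr_ae <| h01.mono fun _ hω => (posPartChord_eq_posPart_sub hω).symm

end Expectation

/-- For a binary outcome `Y ∈ {0,1}` and beliefs `ψ ∈ [0,1]` with `E[Y] = E[ψ]`, all the
moment inequalities `E[(y - Y)⁺] ≥ E[(y - ψ)⁺]` characterizing H₀ hold automatically. -/
theorem binary_outcome_moment_inequalities
    {Ω₁ Ω₂ : Type*} [MeasurableSpace Ω₁] [MeasurableSpace Ω₂]
    (P₁ : Measure Ω₁) (P₂ : Measure Ω₂)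
    [IsProbabilityMeasure P₁] [IsProbabilityMeasure P₂]
    {Y : Ω₁ → ℝ} {ψ : Ω₂ → ℝ}
    (hYm : Measurable Y) (hψm : Measurable ψ)
    (hY01 : ∀ᵐ ω ∂P₁, Y ω = 0 ∨ Y ω = 1)
    (hψ01 : ∀ᵐ ω ∂P₂, ψ ω ∈ Set.Icc (0 : ℝ) 1)
    (hmean : ∫ ω, Y ω ∂P₁ = ∫ ω, ψ ω ∂P₂) :
    ∀ y : ℝ, ∫ ω, max (y - ψ ω) 0 ∂P₂ ≤ ∫ ω, max (y - Y ω) 0 ∂P₁ := by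
  intro y
  rw [integral_posPart_sub_eq_posPartChord y hYm.aestronglyMeasurable hY01, hmean]
  exact integral_posPart_sub_le_posPartChord y hψm.aestronglyMeasurable hψ01
end

section
/- Let V, η, ε be mutually independent real random variables on a common probability space, with V square-integrable, η Gaussian with mean 0 and variance σ_η² ≥ 0, and ε Gaussian with mean 0 and variance σ_ε² ≥ 0. Define ψ = V + η and Y = V + ε. Then the pair of distributions of Y and ψ satisfies H₀ (equivalently, E[Y] = E[ψ] and E[(y − Y)⁺] ≥ E[(y − ψ)⁺] for all y ∈ ℝ) if and only if σ_η² ≤ σ_ε². -/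
/-!
Both sides of H₀ only involve the laws of `ψ` and `Y`, which by independence are
`law V ∗ N(0, σ_η²)` and `law V ∗ N(0, σ_ε²)`; their means agree since the noises are centred.

If `σ_η² ≤ σ_ε²`, then `N(0, σ_ε²) = N(0, σ_η²) ∗ N(0, σ_ε² - σ_η²)`, so the law of `Y` is that
of `ψ` with an independent centred noise added, and Jensen's inequality for the convex payoff
`x ↦ (y - x)⁺` gives the put inequalities.

Conversely, for `t ≥ 0` the payoff `(|x| - t)⁺` is a put at `t` plus a put at `-t` plus the
affine function `x - t`, and `x² / 2 = ∫₀^∞ (|x| - t)⁺ dt`. Integrating in `t`, equal means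
and ordered puts give `Var ψ ≤ Var Y`, that is `Var V + σ_η² ≤ Var V + σ_ε²`.
-/

open MeasureTheory ProbabilityTheory Set

lemma lintegral_Ioi_max_sub_zero {a : ℝ} (ha : 0 ≤ a) :
    ∫⁻ t in Ioi 0, ENNReal.ofReal (max (a - t) 0) = ENNReal.ofReal (a ^ 2 / 2) := by
  have hzero : ∫⁻ t in Ioi a, ENNReal.ofReal (max (a - t) 0) = 0 :=
    (setLIntegral_eq_zero_iff measurableSet_Ioi (by fun_prop)).2 <| ae_of_all _ fun t ht => by
      simp [le_of_lt (mem_Ioi.1 ht)]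
  have hpos : ∫⁻ t in Ioc 0 a, ENNReal.ofReal (max (a - t) 0)
      = ∫⁻ t in Ioc 0 a, ENNReal.ofReal (a - t) :=
    setLIntegral_congr_fun measurableSet_Ioc fun t ht => by rw [max_eq_left (by linarith [ht.2])]
  rw [← Ioc_union_Ioi_eq_Ioi ha, lintegral_union measurableSet_Ioi Ioc_disjoint_Ioi_same, hzero,
    add_zero, hpos, ← ofReal_integral_eq_lintegral_ofReal, ← intervalIntegral.integral_of_le ha]
  · rw [intervalIntegral.integral_sub intervalIntegrable_const
      intervalIntegral.intervalIntegrable_id, integral_id, intervalIntegral.integral_const]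
    congr 1
    simp only [sub_zero, smul_eq_mul, ne_eq, OfNat.ofNat_ne_zero, not_false_eq_true, zero_pow]
    ring
  · exact (continuous_const.sub continuous_id).integrableOn_Ioc
  · exact (ae_restrict_iff' measurableSet_Ioc).2 <| ae_of_all _ fun t ht => sub_nonneg.2 ht.2

lemma max_abs_sub_zero_eq {x t : ℝ} (ht : 0 ≤ t) :
    max (|x| - t) 0 = max (t - x) 0 + max (-t - x) 0 + (x - t) := by
  rcases abs_cases x with ⟨hx, hx0⟩ | ⟨hx, hx0⟩ <;> rw [hx] <;> simp only [max_def] <;>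
    split_ifs <;> linarith

lemma convexOn_max_sub_zero (y : ℝ) : ConvexOn ℝ univ fun x : ℝ => max (y - x) 0 :=
  ((convexOn_const y convex_univ).sub (concaveOn_id convex_univ)).sup
    (convexOn_const 0 convex_univ)

theorem ConvexOn.integral_le_integral_conv {φ : ℝ → ℝ} (hφ : ConvexOn ℝ univ φ)
    (hφc : Continuous φ) {μ ν : Measure ℝ} [SFinite μ] [IsProbabilityMeasure ν]
    (hν : Integrable id ν) (hν0 : ∫ x, x ∂ν = 0) (hμ : Integrable φ μ)
    (hμν : Integrable φ (μ ∗ ν)) :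
    ∫ x, φ x ∂μ ≤ ∫ x, φ x ∂(μ ∗ ν) := by
  have hslices := (integrable_conv_iff hφc.aestronglyMeasurable).1 hμν
  rw [integral_conv hμν]
  refine integral_mono_ae hμ ?_ ?_
  · refine hslices.2.mono' ?_ (ae_of_all _ fun x => norm_integral_le_integral_norm _)
    exact ((hφc.comp continuous_add).stronglyMeasurable.integral_prod_right'
      (ν := ν)).aestronglyMeasurable
  · filter_upwards [hslices.1] with x hx
    have hmean : ∫ y, (x + y) ∂ν = x :=
      (integral_add (integrable_const x) hν).trans (by simp [hν0])
    calc φ x = φ (∫ y, (x + y) ∂ν) := by rw [hmean]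
      _ ≤ ∫ y, φ (x + y) ∂ν :=
        hφ.map_integral_le hφc.continuousOn isClosed_univ (ae_of_all _ fun _ => trivial)
          ((integrable_const x).add hν) hx

theorem ConvexOn.integral_conv_gaussianReal_mono {φ : ℝ → ℝ} (hφ : ConvexOn ℝ univ φ)
    (hφc : Continuous φ) {μ : Measure ℝ} [IsFiniteMeasure μ] {v w : NNReal} (hvw : v ≤ w)
    (hv : Integrable φ (μ ∗ gaussianReal 0 v)) (hw : Integrable φ (μ ∗ gaussianReal 0 w)) :
    ∫ x, φ x ∂(μ ∗ gaussianReal 0 v) ≤ ∫ x, φ x ∂(μ ∗ gaussianReal 0 w) := by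
  have hsplit : gaussianReal 0 w = gaussianReal 0 v ∗ gaussianReal 0 (w - v) := by
    rw [gaussianReal_conv_gaussianReal, add_zero, add_tsub_cancel_of_le hvw]
  rw [hsplit, ← Measure.conv_assoc] at hw ⊢
  exact hφ.integral_le_integral_conv hφc ((memLp_id_gaussianReal 1).integrable le_rfl)
    integral_id_gaussianReal hv hw

section RandomVariables

variable {Ω : Type*} [MeasurableSpace Ω] {P : Measure Ω}

theorem ConvexOn.integral_comp_add_gaussianReal_mono [IsFiniteMeasure P] {V η ε : Ω → ℝ}
    {φ : ℝ → ℝ} (hφ : ConvexOn ℝ univ φ) (hφc : Continuous φ) {v w : NNReal}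
    (hV : AEMeasurable V P) (hη : HasLaw η (gaussianReal 0 v) P)
    (hε : HasLaw ε (gaussianReal 0 w) P) (hVη : IndepFun V η P) (hVε : IndepFun V ε P)
    (hvw : v ≤ w) (hη_int : Integrable (fun ω => φ (V ω + η ω)) P)
    (hε_int : Integrable (fun ω => φ (V ω + ε ω)) P) :
    ∫ ω, φ (V ω + η ω) ∂P ≤ ∫ ω, φ (V ω + ε ω) ∂P := by
  have hVlaw : HasLaw V (P.map V) P := ⟨hV, rfl⟩
  have hψ := hVη.hasLaw_fun_add hVlaw hη
  have hY := hVε.hasLaw_fun_add hVlaw hε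
  have hlaw_int {Z : Ω → ℝ} {ρ : Measure ℝ} (hZ : HasLaw Z ρ P)
      (hZ_int : Integrable (fun ω => φ (Z ω)) P) : Integrable φ ρ := by
    rw [← hZ.map_eq]
    exact (integrable_map_measure hφc.aestronglyMeasurable hZ.aemeasurable).2 hZ_int
  calc ∫ ω, φ (V ω + η ω) ∂P = ∫ x, φ x ∂(P.map V ∗ gaussianReal 0 v) :=
        hψ.integral_comp hφc.aestronglyMeasurable
    _ ≤ ∫ x, φ x ∂(P.map V ∗ gaussianReal 0 w) :=
        hφ.integral_conv_gaussianReal_mono hφc hvw (hlaw_int hψ hη_int) (hlaw_int hY hε_int)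
    _ = ∫ ω, φ (V ω + ε ω) ∂P := (hY.integral_comp hφc.aestronglyMeasurable).symm

lemma lintegral_sq_div_two_eq [SFinite P] {X : Ω → ℝ} (hX : AEMeasurable X P) :
    ∫⁻ ω, ENNReal.ofReal (X ω ^ 2 / 2) ∂P
      = ∫⁻ t in Ioi 0, ∫⁻ ω, ENNReal.ofReal (max (|X ω| - t) 0) ∂P := by
  simp_rw [← sq_abs (X _), ← lintegral_Ioi_max_sub_zero (abs_nonneg _)]
  exact lintegral_lintegral_swap (by fun_prop)

lemma integral_max_abs_sub_zero_eq [IsProbabilityMeasure P] {X : Ω → ℝ} (hX : Integrable X P)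
    {t : ℝ} (ht : 0 ≤ t) :
    ∫ ω, max (|X ω| - t) 0 ∂P
      = ∫ ω, max (t - X ω) 0 ∂P + ∫ ω, max (-t - X ω) 0 ∂P + (∫ ω, X ω ∂P - t) := by
  have hput (s : ℝ) : Integrable (fun ω => max (s - X ω) 0) P :=
    ((integrable_const s).sub hX).pos_part
  have hsum : Integrable (fun ω => max (t - X ω) 0 + max (-t - X ω) 0) P :=
    (hput t).add (hput (-t))
  have hshift : Integrable (fun ω => X ω - t) P := hX.sub (integrable_const t)
  simp_rw [max_abs_sub_zero_eq ht]
  rw [integral_add hsum hshift, integral_add (hput t) (hput (-t)),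
    integral_sub hX (integrable_const t), integral_const]
  simp

theorem variance_le_of_integral_max_sub_le [IsProbabilityMeasure P] {X Y : Ω → ℝ}
    (hX : MemLp X 2 P) (hY : MemLp Y 2 P) (hmean : ∫ ω, X ω ∂P = ∫ ω, Y ω ∂P)
    (hput : ∀ t, ∫ ω, max (t - X ω) 0 ∂P ≤ ∫ ω, max (t - Y ω) 0 ∂P) :
    Var[X; P] ≤ Var[Y; P] := by
  have hlint : ∫⁻ ω, ENNReal.ofReal (X ω ^ 2 / 2) ∂P
      ≤ ∫⁻ ω, ENNReal.ofReal (Y ω ^ 2 / 2) ∂P := by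
    rw [lintegral_sq_div_two_eq hX.aemeasurable, lintegral_sq_div_two_eq hY.aemeasurable]
    refine setLIntegral_mono' measurableSet_Ioi fun t (ht : 0 < t) => ?_
    have hlayer (Z : Ω → ℝ) (hZ : Integrable Z P) :
        ∫⁻ ω, ENNReal.ofReal (max (|Z ω| - t) 0) ∂P = ENNReal.ofReal
          (∫ ω, max (t - Z ω) 0 ∂P + ∫ ω, max (-t - Z ω) 0 ∂P + (∫ ω, Z ω ∂P - t)) := by
      rw [← integral_max_abs_sub_zero_eq hZ ht.le]
      exact (ofReal_integral_eq_lintegral_ofReal (hZ.abs.sub (integrable_const t)).pos_part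
        (ae_of_all _ fun _ => le_max_right _ _)).symm
    rw [hlayer X (hX.integrable one_le_two), hlayer Y (hY.integrable one_le_two), hmean]
    exact ENNReal.ofReal_le_ofReal (by linarith [hput t, hput (-t)])
  have hsq : ∫ ω, X ω ^ 2 ∂P ≤ ∫ ω, Y ω ^ 2 ∂P := by
    rw [← ofReal_integral_eq_lintegral_ofReal (hX.integrable_sq.div_const 2)
        (ae_of_all _ fun ω => by positivity),
      ← ofReal_integral_eq_lintegral_ofReal (hY.integrable_sq.div_const 2)
        (ae_of_all _ fun ω => by positivity),
      ENNReal.ofReal_le_ofReal_iff (integral_nonneg fun ω => by positivity),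
      integral_div, integral_div] at hlint
    linarith
  rw [variance_eq_sub hX, variance_eq_sub hY, hmean]
  simpa using hsq

variable {V η : Ω → ℝ} {v : NNReal}

lemma integral_add_of_hasLaw_gaussianReal [IsProbabilityMeasure P] (hV : Integrable V P)
    (hη : HasLaw η (gaussianReal 0 v) P) :
    ∫ ω, (V ω + η ω) ∂P = ∫ ω, V ω ∂P := by
  rw [integral_add hV hη.hasGaussianLaw.integrable, hη.integral_eq, integral_id_gaussianReal,
    add_zero]

lemma ProbabilityTheory.IndepFun.variance_add_of_hasLaw_gaussianReal {m : ℝ} (hV : MemLp V 2 P)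
    (hη : HasLaw η (gaussianReal m v) P) (hVη : IndepFun V η P) :
    Var[V + η; P] = Var[V; P] + v := by
  rw [hVη.variance_add hV hη.hasGaussianLaw.memLp_two, hη.variance_eq,
    variance_id_gaussianReal]

end RandomVariables

theorem gaussian_deviation_H0_iff_variance_le_general
    {Ω : Type*} [MeasurableSpace Ω] (P : Measure Ω) [IsProbabilityMeasure P]
    {V η ε : Ω → ℝ}
    (hηm : Measurable η) (hεm : Measurable ε)
    (hindep : iIndepFun ![V, η, ε] P)
    (hV2 : MemLp V 2 P)
    (vη vε : NNReal)
    (hη : P.map η = gaussianReal 0 vη)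
    (hε : P.map ε = gaussianReal 0 vε) :
    ((∫ ω, (V ω + ε ω) ∂P = ∫ ω, (V ω + η ω) ∂P) ∧
        ∀ y : ℝ, ∫ ω, max (y - (V ω + η ω)) 0 ∂P ≤ ∫ ω, max (y - (V ω + ε ω)) 0 ∂P) ↔
      vη ≤ vε := by
  have hVη : IndepFun V η P := by simpa using hindep.indepFun (i := 0) (j := 1) (by decide)
  have hVε : IndepFun V ε P := by simpa using hindep.indepFun (i := 0) (j := 2) (by decide)
  have hηlaw : HasLaw η (gaussianReal 0 vη) P := ⟨hηm.aemeasurable, hη⟩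
  have hεlaw : HasLaw ε (gaussianReal 0 vε) P := ⟨hεm.aemeasurable, hε⟩
  have hV := hV2.integrable one_le_two
  have hmean : ∫ ω, (V ω + ε ω) ∂P = ∫ ω, (V ω + η ω) ∂P := by
    rw [integral_add_of_hasLaw_gaussianReal hV hηlaw, integral_add_of_hasLaw_gaussianReal hV hεlaw]
  constructor
  · rintro ⟨-, hput⟩
    have hvar := variance_le_of_integral_max_sub_le (hV2.add hηlaw.hasGaussianLaw.memLp_two)
      (hV2.add hεlaw.hasGaussianLaw.memLp_two) hmean.symm hput
    rw [hVη.variance_add_of_hasLaw_gaussianReal hV2 hηlaw,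
      hVε.variance_add_of_hasLaw_gaussianReal hV2 hεlaw] at hvar
    exact_mod_cast le_of_add_le_add_left hvar
  · intro hvw
    refine ⟨hmean, fun y => ?_⟩
    exact (convexOn_max_sub_zero y).integral_comp_add_gaussianReal_mono
      (by fun_prop) hV2.aemeasurable hηlaw hεlaw hVη hVε hvw
      ((integrable_const y).sub (hV.add hηlaw.hasGaussianLaw.integrable)).pos_part
      ((integrable_const y).sub (hV.add hεlaw.hasGaussianLaw.integrable)).pos_part

/-- If `ψ = V + η` and `Y = V + ε` with `V, η, ε` mutually independent, `V` square-integrable,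
`η ∼ N(0, σ_η²)` and `ε ∼ N(0, σ_ε²)`, then the pair of distributions of `Y` and `ψ`
satisfies H₀ (equivalently, `E[Y] = E[ψ]` and `E[(y - Y)⁺] ≥ E[(y - ψ)⁺]` for all `y`)
if and only if `σ_η² ≤ σ_ε²`. -/
theorem gaussian_deviation_H0_iff_variance_le
    {Ω : Type*} [MeasurableSpace Ω] (P : Measure Ω) [IsProbabilityMeasure P]
    {V η ε : Ω → ℝ}
    (hVm : Measurable V) (hηm : Measurable η) (hεm : Measurable ε)
    (hindep : iIndepFun ![V, η, ε] P)
    (hV2 : MemLp V 2 P)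
    (vη vε : NNReal)
    (hη : P.map η = gaussianReal 0 vη)
    (hε : P.map ε = gaussianReal 0 vε) :
    ((∫ ω, (V ω + ε ω) ∂P = ∫ ω, (V ω + η ω) ∂P) ∧
        ∀ y : ℝ, ∫ ω, max (y - (V ω + η ω)) 0 ∂P ≤ ∫ ω, max (y - (V ω + ε ω)) 0 ∂P) ↔
      vη ≤ vε :=
  gaussian_deviation_H0_iff_variance_le_general P hηm hεm hindep hV2 vη vε hη hε
end
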